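/- arXiv:1111.3063 — 7 statements merged into one kernel-verified Lean document; each statement's English description precedes it below -/
import Mathlib

section
/- Let (a_i)_{i≥1} be i.i.d. real-valued random variables with E[e^{θ a_1}] < ∞ for a fixed θ > 0, let A(t) = Σ_{i=1}^{t} a_i, and let α(θ) = (1/θ) log E[e^{θ A(1)}]. Then for every t ∈ ℕ and every σ ≥ 0, P{ max_{0 ≤ u ≤ t} ( A(u) − α(θ) u ) > σ } ≤ e^{−θ σ}. -/
/-!
Put `g k = exp (θ (a k - α))`. The choice of `α` makes every `g k` have mean one, so by
independence the products `Z u = ∏_{k<u} g k = exp (θ (A u - α u))` form a nonnegative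
martingale of mean one. The event `max_{u ≤ t} (A u - α u) > σ` lies inside
`max_{u ≤ t} Z u ≥ exp (θ σ)`, which has probability at most `exp (-θ σ)` by Doob's maximal
inequality.
-/

open MeasureTheory ProbabilityTheory

lemma measurable_finset_prod_iSup_comap {Ω ι : Type*} {g : ι → Ω → ℝ} {s : Finset ι}
    {S : Set ι} (hs : ↑s ⊆ S) :
    Measurable[⨆ k ∈ S, MeasurableSpace.comap (g k) inferInstance]
      fun ω => ∏ k ∈ s, g k ω :=
  Finset.measurable_fun_prod s fun k hk =>
    (comap_measurable (g k)).mono (le_iSup₂ (f := fun k (_ : k ∈ S) =>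
      MeasurableSpace.comap (g k) inferInstance) k (hs hk)) le_rfl

lemma setOf_lt_sup'_subset_setOf_exp_mul_le_sup' {Ω ι : Type*} {s : Finset ι}
    (hs : s.Nonempty) {F : ι → Ω → ℝ} {θ : ℝ} (hθ : 0 ≤ θ) (σ : ℝ) :
    {ω | σ < s.sup' hs (F · ω)} ⊆
      {ω | Real.exp (θ * σ) ≤ s.sup' hs fun u => Real.exp (θ * F u ω)} := by
  intro ω (hω : σ < _)
  obtain ⟨u, hu, hσu⟩ := (Finset.lt_sup'_iff _).1 hω
  exact Finset.le_sup'_of_le (fun u => Real.exp (θ * F u ω)) hu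
    (Real.exp_le_exp.2 (mul_le_mul_of_nonneg_left hσu.le hθ))

namespace ProbabilityTheory

variable {Ω ι : Type*} [MeasurableSpace Ω] {μ : Measure Ω}

lemma iIndepFun.integral_finset_prod {g : ι → Ω → ℝ} (hg : iIndepFun g μ)
    (hmeas : ∀ k, AEStronglyMeasurable (g k) μ) (s : Finset ι) :
    ∫ ω, ∏ k ∈ s, g k ω ∂μ = ∏ k ∈ s, ∫ ω, g k ω ∂μ := by
  have := (hg.precomp (g := ((↑) : s → ι)) Subtype.val_injective)
    |>.integral_fun_prod_eq_prod_integral fun k => hmeas k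
  convert this using 1
  · congr 1 with ω
    exact (Finset.prod_coe_sort s (g · ω)).symm
  · exact (Finset.prod_coe_sort s _).symm

theorem iIndepFun.martingale_prod_range {g : ℕ → Ω → ℝ} (hg : iIndepFun g μ)
    (hmeas : ∀ k, Measurable (g k)) (h_one : ∀ k, ∫ ω, g k ω ∂μ = 1) :
    Martingale (fun n ω => ∏ k ∈ Finset.range n, g k ω)
      (Filtration.natural _ fun n =>
        (Finset.measurable_fun_prod (Finset.range n) fun k _ => hmeas k).stronglyMeasurable)
      μ := by
  have := hg.isProbabilityMeasure
  set f : ℕ → Ω → ℝ := fun n ω => ∏ k ∈ Finset.range n, g k ω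
  set ℱ := Filtration.natural f fun n =>
    (Finset.measurable_fun_prod (Finset.range n) fun k _ => hmeas k).stronglyMeasurable
  have integral_f (n : ℕ) : ∫ ω, f n ω ∂μ = 1 := by
    simp [f, hg.integral_finset_prod (fun k => (hmeas k).aestronglyMeasurable), h_one]
  -- both integrals equal `1 ≠ 0`, which rules out the junk value of a non-integrable function
  have integrable_f (n : ℕ) : Integrable (f n) μ :=
    Integrable.of_integral_ne_zero (by rw [integral_f]; exact one_ne_zero)
  have integrable_g (k : ℕ) : Integrable (g k) μ :=
    Integrable.of_integral_ne_zero (by rw [h_one]; exact one_ne_zero)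
  have ℱ_le_past (i : ℕ) :
      ℱ i ≤ ⨆ k ∈ {k | k < i}, MeasurableSpace.comap (g k) inferInstance :=
    iSup₂_le fun j hj => (measurable_finset_prod_iSup_comap fun k hk =>
      (Finset.mem_range.1 hk).trans_le hj).comap_le
  have indep_g (i : ℕ) : Indep (MeasurableSpace.comap (g i) inferInstance) (ℱ i) μ :=
    indep_of_indep_of_le_right (indep_of_indep_of_le_left
      (indep_iSup_of_disjoint (fun k => (hmeas k).comap_le) hg
        (S := {i}) (T := {k | k < i}) (by simp)) (by simp)) (ℱ_le_past i)
  have f_succ (i : ℕ) : f (i + 1) = f i * g i := by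
    funext ω; simp [f, Finset.prod_range_succ]
  refine martingale_nat (Filtration.stronglyAdapted_natural _) integrable_f fun i => ?_
  have cond_g : μ[g i | ℱ i] =ᵐ[μ] fun _ => 1 := by
    simpa [h_one] using condExp_indep_eq (hmeas i).comap_le (ℱ.le i)
      (comap_measurable (g i)).stronglyMeasurable (indep_g i)
  change f i =ᵐ[μ] μ[f (i + 1) | ℱ i]
  rw [f_succ]
  filter_upwards [condExp_mul_of_stronglyMeasurable_left
    (Filtration.stronglyAdapted_natural _ i) (f_succ i ▸ integrable_f (i + 1)) (integrable_g i),
    cond_g] with ω h1 h2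
  rw [h1, Pi.mul_apply, h2, mul_one]

lemma integral_exp_mul_sub_cgf_div {X : Ω → ℝ} {θ : ℝ} (hμ : μ ≠ 0) (hθ : θ ≠ 0)
    (hint : Integrable (fun ω => Real.exp (θ * X ω)) μ) :
    ∫ ω, Real.exp (θ * (X ω - cgf X μ θ / θ)) ∂μ = 1 := by
  have hmgf := mgf_pos' hμ hint
  simp_rw [mul_sub, mul_div_cancel₀ _ hθ, Real.exp_sub, integral_div, cgf,
    Real.exp_log hmgf]
  exact div_self hmgf.ne'

end ProbabilityTheory

namespace MeasureTheory

variable {Ω : Type*} [MeasurableSpace Ω] {μ : Measure Ω}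

theorem Submartingale.measure_le_sup'_le_integral_div [IsFiniteMeasure μ]
    {f : ℕ → Ω → ℝ} {ℱ : Filtration ℕ ‹MeasurableSpace Ω›} (hf : Submartingale f ℱ μ)
    (hnonneg : 0 ≤ f) {ε : ℝ} (hε : 0 < ε) (n : ℕ) :
    μ {ω | ε ≤ (Finset.range (n + 1)).sup' Finset.nonempty_range_add_one
        fun k => f k ω} ≤ ENNReal.ofReal ((∫ ω, f n ω ∂μ) / ε) := by
  lift ε to NNReal using hε.le
  have hε' : (ε : ENNReal) ≠ 0 := by exact_mod_cast hε.ne'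
  rw [ENNReal.ofReal_div_of_pos hε, ENNReal.ofReal_coe_nnreal,
    ENNReal.le_div_iff_mul_le (Or.inl hε') (Or.inl ENNReal.coe_ne_top), mul_comm]
  exact (maximal_ineq hf hnonneg n).trans <| ENNReal.ofReal_le_ofReal <|
    setIntegral_le_integral (hf.integrable n) (.of_forall fun ω => hnonneg n ω)

end MeasureTheory

theorem maximal_inequality_arrival_general
    {Ω : Type*} [MeasurableSpace Ω] (μ : Measure Ω) [IsProbabilityMeasure μ]
    (a : ℕ → Ω → ℝ) (ha_meas : ∀ i, Measurable (a i))
    (ha_indep : iIndepFun a μ)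
    (ha_ident : ∀ i, IdentDistrib (a i) (a 0) μ μ)
    (θ : ℝ) (hθ : 0 < θ)
    (ha_int : Integrable (fun ω => Real.exp (θ * a 0 ω)) μ)
    (A : ℕ → Ω → ℝ) (hA : ∀ t ω, A t ω = ∑ i ∈ Finset.range t, a i ω)
    (α : ℝ) (hα : α = (1 / θ) * Real.log (∫ ω, Real.exp (θ * A 1 ω) ∂μ))
    (t : ℕ) (σ : ℝ) :
    μ {ω | σ < (Finset.range (t + 1)).sup' ⟨0, Finset.mem_range.mpr (Nat.succ_pos t)⟩
        (fun u => A u ω - α * u)}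
      ≤ ENNReal.ofReal (Real.exp (-θ * σ)) := by
  set g : ℕ → Ω → ℝ := fun k ω => Real.exp (θ * (a k ω - α))
  have hφ : Measurable fun x : ℝ => Real.exp (θ * (x - α)) := by fun_prop
  have hg_meas (k : ℕ) : Measurable (g k) := hφ.comp (ha_meas k)
  have hg_indep : iIndepFun g μ := ha_indep.comp _ fun _ => hφ
  have hα_cgf : α = cgf (a 0) μ θ / θ := by
    simp only [hα, hA, Finset.sum_range_one, cgf, mgf]
    ring
  have hg_one (k : ℕ) : ∫ ω, g k ω ∂μ = 1 :=
    calc ∫ ω, g k ω ∂μ = ∫ ω, Real.exp (θ * (a 0 ω - α)) ∂μ :=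
          ((ha_ident k).comp hφ).integral_eq
      _ = 1 := by
        rw [hα_cgf]
        exact integral_exp_mul_sub_cgf_div (IsProbabilityMeasure.ne_zero μ) hθ.ne' ha_int
  have hg_prod (u : ℕ) (ω : Ω) :
      ∏ k ∈ Finset.range u, g k ω = Real.exp (θ * (A u ω - α * u)) := by
    simp only [g, ← Real.exp_sum, hA, ← Finset.mul_sum, Finset.sum_sub_distrib,
      Finset.sum_const, Finset.card_range, nsmul_eq_mul, mul_comm (u : ℝ)]
  have hevent := setOf_lt_sup'_subset_setOf_exp_mul_le_sup'
    (Finset.nonempty_range_add_one (n := t)) (F := fun u ω => A u ω - α * u) hθ.le σ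
  simp only [← hg_prod] at hevent
  calc _ ≤ _ := measure_mono hevent
    _ ≤ _ := (hg_indep.martingale_prod_range hg_meas hg_one).submartingale
        |>.measure_le_sup'_le_integral_div
          (fun u ω => Finset.prod_nonneg fun k _ => (Real.exp_pos _).le) (Real.exp_pos _) t
    _ = ENNReal.ofReal (Real.exp (-θ * σ)) := by
      rw [hg_indep.integral_finset_prod (fun k => (hg_meas k).aestronglyMeasurable)]
      simp only [hg_one, Finset.prod_const_one, one_div, neg_mul, Real.exp_neg]

/-- Maximal inequality for the arrival process: if `(a i)` are i.i.d. with
`E[exp (θ a 1)] < ∞` for `θ > 0`, `A t = Σ_{i<t} a i` and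
`α = (1/θ) log E[exp (θ A 1)]`, then for every `t` and `σ ≥ 0`,
`P{ max_{0 ≤ u ≤ t} (A u − α u) > σ } ≤ exp (−θ σ)`. -/
theorem maximal_inequality_arrival
    {Ω : Type*} [MeasurableSpace Ω] (μ : Measure Ω) [IsProbabilityMeasure μ]
    (a : ℕ → Ω → ℝ) (ha_meas : ∀ i, Measurable (a i))
    (ha_indep : iIndepFun a μ)
    (ha_ident : ∀ i, IdentDistrib (a i) (a 0) μ μ)
    (θ : ℝ) (hθ : 0 < θ)
    (ha_int : Integrable (fun ω => Real.exp (θ * a 0 ω)) μ)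
    (A : ℕ → Ω → ℝ) (hA : ∀ t ω, A t ω = ∑ i ∈ Finset.range t, a i ω)
    (α : ℝ) (hα : α = (1 / θ) * Real.log (∫ ω, Real.exp (θ * A 1 ω) ∂μ))
    (t : ℕ) (σ : ℝ) (hσ : 0 ≤ σ) :
    μ {ω | σ < (Finset.range (t + 1)).sup' ⟨0, Finset.mem_range.mpr (Nat.succ_pos t)⟩
        (fun u => A u ω - α * u)}
      ≤ ENNReal.ofReal (Real.exp (-θ * σ)) :=
  maximal_inequality_arrival_general μ a ha_meas ha_indep ha_ident θ hθ ha_int A hA α hα t σ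
end

section
/- Let (a_i)_{i≥1} and (s_i)_{i≥1} be two mutually independent families of i.i.d. real-valued random variables, let A(t) = Σ_{i=1}^{t} a_i, S(t) = Σ_{i=1}^{t} s_i, α(θ) = (1/θ) log E[e^{θ A(1)}] and β(θ) = −(1/θ) log E[e^{−θ S(1)}]. If θ* > 0 satisfies E[e^{θ* a_1}] < ∞, E[e^{−θ* s_1}] < ∞ and α(θ*) ≤ β(θ*), then for every t ∈ ℕ and every σ ≥ 0, P{ max_{0 ≤ u ≤ t} ( A(u) − S(u) ) > σ } ≤ e^{−θ* σ}. -/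
open MeasureTheory ProbabilityTheory Finset Real

/-!
Put `ρ = E[exp (θ a₁)] E[exp (-θ s₁)]`; the stability condition `α(θ) ≤ β(θ)` says `ρ ≤ 1`.
The factors `exp (θ aₖ) exp (-θ sₖ) / ρ` are independent of the past and have mean one, so their
partial products form a nonnegative martingale started at `1`. Since `ρ ≤ 1` it dominates
`exp (θ (A u - S u))`, and Doob's maximal inequality bounds the probability that it reaches
`exp (θ σ)` by time `t` by `exp (-θ σ)`.
-/

section ProductMartingale

variable {Ω : Type*} {m0 : MeasurableSpace Ω} {μ : Measure Ω} {ℱ : Filtration ℕ m0}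
  {X : ℕ → Ω → ℝ}

lemma stronglyAdapted_prod_range (hX_meas : ∀ n, Measurable[ℱ (n + 1)] (X n)) :
    StronglyAdapted ℱ (fun n ω => ∏ k ∈ range n, X k ω) := fun _ =>
  (Finset.measurable_prod _ fun k hk =>
    (hX_meas k).mono (ℱ.mono (mem_range.1 hk)) le_rfl).stronglyMeasurable

lemma indepFun_prod_range (hX_meas : ∀ n, Measurable[ℱ (n + 1)] (X n))
    (hX_indep : ∀ n, Indep (MeasurableSpace.comap (X n) inferInstance) (ℱ n) μ) (n : ℕ) :
    IndepFun (fun ω => ∏ k ∈ range n, X k ω) (X n) μ :=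
  (IndepFun_iff_Indep _ _ _).2 <| indep_of_indep_of_le_left (hX_indep n).symm
    (stronglyAdapted_prod_range hX_meas n).measurable.comap_le

lemma integrable_prod_range [IsFiniteMeasure μ] (hX_meas : ∀ n, Measurable[ℱ (n + 1)] (X n))
    (hX_indep : ∀ n, Indep (MeasurableSpace.comap (X n) inferInstance) (ℱ n) μ)
    (hX_int : ∀ n, Integrable (X n) μ) :
    ∀ n, Integrable (fun ω => ∏ k ∈ range n, X k ω) μ
  | 0 => by simp
  | n + 1 => by
    simp only [prod_range_succ]
    exact (indepFun_prod_range hX_meas hX_indep n).integrable_mul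
      (integrable_prod_range hX_meas hX_indep hX_int n) (hX_int n)

lemma martingale_prod_range [IsFiniteMeasure μ] (hX_meas : ∀ n, Measurable[ℱ (n + 1)] (X n))
    (hX_indep : ∀ n, Indep (MeasurableSpace.comap (X n) inferInstance) (ℱ n) μ)
    (hX_int : ∀ n, Integrable (X n) μ) (hX_mean : ∀ n, μ[X n] = 1) :
    Martingale (fun n ω => ∏ k ∈ range n, X k ω) ℱ μ := by
  have hadp := stronglyAdapted_prod_range hX_meas
  have hint := integrable_prod_range hX_meas hX_indep hX_int
  refine martingale_nat hadp hint fun n => ?_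
  have hX_le : MeasurableSpace.comap (X n) inferInstance ≤ m0 :=
    ((hX_meas n).mono (ℱ.le _) le_rfl).comap_le
  have hpull := condExp_mul_of_stronglyMeasurable_left (hadp n)
    (by simpa only [prod_range_succ, Pi.mul_def] using hint (n + 1)) (hX_int n)
  filter_upwards [hpull, condExp_indep_eq hX_le (ℱ.le n)
    (comap_measurable (X n)).stronglyMeasurable (hX_indep n)] with ω h_pull h_const
  simp only [prod_range_succ, ← Pi.mul_def]
  rw [h_pull, Pi.mul_apply, h_const, hX_mean, mul_one]

lemma maximal_ineq_prod_range [IsProbabilityMeasure μ]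
    (hX_meas : ∀ n, Measurable[ℱ (n + 1)] (X n))
    (hX_indep : ∀ n, Indep (MeasurableSpace.comap (X n) inferInstance) (ℱ n) μ)
    (hX_int : ∀ n, Integrable (X n) μ) (hX_mean : ∀ n, μ[X n] = 1)
    (hX_nonneg : ∀ n ω, 0 ≤ X n ω) {ε : ℝ} (hε : 0 < ε) (n : ℕ) :
    μ {ω | ε ≤ (range (n + 1)).sup' nonempty_range_add_one fun k => ∏ j ∈ range k, X j ω}
      ≤ ENNReal.ofReal ε⁻¹ := by
  set E := {ω | ε ≤ (range (n + 1)).sup' nonempty_range_add_one fun k => ∏ j ∈ range k, X j ω}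
  have hmart := martingale_prod_range hX_meas hX_indep hX_int hX_mean
  have hnonneg : 0 ≤ fun n ω => ∏ k ∈ range n, X k ω := fun n ω =>
    prod_nonneg fun k _ => hX_nonneg k ω
  have hdoob := maximal_ineq hmart.submartingale hnonneg (ε := ⟨ε, hε.le⟩) n
  have hmean : ∫ ω, ∏ k ∈ range n, X k ω ∂μ = 1 := by
    simpa using (hmart.setIntegral_eq (Nat.zero_le n) MeasurableSet.univ).symm
  have hset : ∫ ω in E, ∏ k ∈ range n, X k ω ∂μ ≤ 1 :=
    hmean ▸ setIntegral_le_integral (integrable_prod_range hX_meas hX_indep hX_int n)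
      (Filter.Eventually.of_forall (hnonneg n))
  rw [ENNReal.ofReal_inv_of_pos hε, ENNReal.le_inv_iff_mul_le, mul_comm,
    ENNReal.ofReal_eq_coe_nnreal hε.le]
  exact hdoob.trans (ENNReal.ofReal_le_one.2 hset)

end ProductMartingale

section TimedFiltration

variable {Ω ι β : Type*} {m0 : MeasurableSpace Ω} [MeasurableSpace β]
  (f : ι → Ω → β) (τ : ι → ℕ)

/-- `f i` is observed at time `τ i`; at time `n` everything observed strictly earlier is known. -/
def timedFiltration (hf : ∀ i, Measurable (f i)) : Filtration ℕ m0 where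
  seq n := ⨆ i ∈ {i | τ i < n}, MeasurableSpace.comap (f i) inferInstance
  mono' _ _ hnm := biSup_mono fun _ hi => lt_of_lt_of_le hi hnm
  le' _ := iSup₂_le fun i _ => (hf i).comap_le

abbrev observedAt (n : ℕ) : MeasurableSpace Ω :=
  ⨆ i ∈ {i | τ i = n}, MeasurableSpace.comap (f i) inferInstance

variable {f τ}

lemma measurable_observedAt {i : ι} : Measurable[observedAt f τ (τ i)] (f i) :=
  (comap_measurable (f i)).mono
    (le_iSup₂ (f := fun j (_ : j ∈ {j | τ j = τ i}) => MeasurableSpace.comap (f j) _) i rfl) le_rfl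

lemma observedAt_le_timedFiltration_succ (hf : ∀ i, Measurable (f i)) (n : ℕ) :
    observedAt f τ n ≤ timedFiltration f τ hf (n + 1) :=
  biSup_mono fun _ hi => Nat.lt_succ_of_le (le_of_eq hi)

lemma indep_observedAt_timedFiltration {μ : Measure Ω} (hf : ∀ i, Measurable (f i))
    (h_indep : iIndepFun f μ) (n : ℕ) :
    Indep (observedAt f τ n) (timedFiltration f τ hf n) μ :=
  indep_iSup_of_disjoint (fun i => (hf i).comap_le) h_indep.iIndep <|
    Set.disjoint_left.2 fun _ h₁ h₂ => (Nat.lt_irrefl n) (h₁ ▸ h₂)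

end TimedFiltration

lemma mul_le_one_of_inv_mul_log_le {θ x y : ℝ} (hθ : 0 < θ) (hx : 0 < x) (hy : 0 < y)
    (h : 1 / θ * log x ≤ -(1 / θ) * log y) : x * y ≤ 1 := by
  rw [neg_mul, ← mul_neg, mul_le_mul_iff_right₀ (by positivity)] at h
  exact (log_nonpos_iff (by positivity)).1 (by rw [log_mul hx.ne' hy.ne']; linarith)

lemma exp_mul_sum_sub_sum_le_prod_div {ρ : ℝ} (hρ_pos : 0 < ρ) (hρ_le : ρ ≤ 1)
    (θ : ℝ) (a s : ℕ → ℝ) (n : ℕ) :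
    exp (θ * (∑ k ∈ range n, a k - ∑ k ∈ range n, s k))
      ≤ ∏ k ∈ range n, exp (θ * a k) * exp (-θ * s k) / ρ := by
  rw [← sum_sub_distrib, mul_sum, exp_sum]
  refine prod_le_prod (fun _ _ => (exp_pos _).le) fun k _ => ?_
  rw [← exp_add, mul_sub, sub_eq_add_neg, ← neg_mul]
  exact le_div_self (exp_pos _).le hρ_pos hρ_le

lemma measurable_observedAt_exp_mul_exp_mul {Ω : Type*} {a s : ℕ → Ω → ℝ} (θ θ' : ℝ) (n : ℕ) :
    Measurable[observedAt (Sum.elim a s) (Sum.elim id id) n]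
      (fun ω => exp (θ * a n ω) * exp (θ' * s n ω)) :=
  ((measurable_observedAt (f := Sum.elim a s) (τ := Sum.elim id id) (i := .inl n)).const_mul
    θ).exp.mul
  ((measurable_observedAt (f := Sum.elim a s) (τ := Sum.elim id id) (i := .inr n)).const_mul
    θ').exp

section IIDIncrements

variable {Ω : Type*} [MeasurableSpace Ω] {μ : Measure Ω} {a s : ℕ → Ω → ℝ}

lemma indepFun_exp_mul_exp_mul (h_indep : iIndepFun (Sum.elim a s) μ) (θ θ' : ℝ) (k : ℕ) :
    IndepFun (fun ω => exp (θ * a k ω)) (fun ω => exp (θ' * s k ω)) μ :=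
  (h_indep.indepFun (i := Sum.inl k) (j := Sum.inr k) Sum.inl_ne_inr).comp
    (φ := fun x => exp (θ * x)) (ψ := fun x => exp (θ' * x)) (by fun_prop) (by fun_prop)

lemma integral_exp_mul_exp_mul (h_indep : iIndepFun (Sum.elim a s) μ)
    (ha_ident : ∀ i, IdentDistrib (a i) (a 0) μ μ) (hs_ident : ∀ i, IdentDistrib (s i) (s 0) μ μ)
    (θ θ' : ℝ) (k : ℕ) :
    ∫ ω, exp (θ * a k ω) * exp (θ' * s k ω) ∂μ
      = (∫ ω, exp (θ * a 0 ω) ∂μ) * ∫ ω, exp (θ' * s 0 ω) ∂μ := by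
  rw [(indepFun_exp_mul_exp_mul h_indep θ θ' k).integral_fun_mul_eq_mul_integral
      ((ha_ident k).aemeasurable_fst.const_mul θ).exp.aestronglyMeasurable
      ((hs_ident k).aemeasurable_fst.const_mul θ').exp.aestronglyMeasurable]
  exact congrArg₂ (· * ·) ((ha_ident k).comp (u := fun x => exp (θ * x)) (by fun_prop)).integral_eq
    ((hs_ident k).comp (u := fun x => exp (θ' * x)) (by fun_prop)).integral_eq

lemma integrable_exp_mul_exp_mul (h_indep : iIndepFun (Sum.elim a s) μ)
    (ha_ident : ∀ i, IdentDistrib (a i) (a 0) μ μ) (hs_ident : ∀ i, IdentDistrib (s i) (s 0) μ μ)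
    {θ θ' : ℝ} (ha_int : Integrable (fun ω => exp (θ * a 0 ω)) μ)
    (hs_int : Integrable (fun ω => exp (θ' * s 0 ω)) μ) (k : ℕ) :
    Integrable (fun ω => exp (θ * a k ω) * exp (θ' * s k ω)) μ :=
  (indepFun_exp_mul_exp_mul h_indep θ θ' k).integrable_mul
    (((ha_ident k).comp (u := fun x => exp (θ * x)) (by fun_prop)).integrable_iff.2 ha_int)
    (((hs_ident k).comp (u := fun x => exp (θ' * x)) (by fun_prop)).integrable_iff.2 hs_int)

lemma maximal_ineq_prod_exp_mul_exp_mul [IsProbabilityMeasure μ]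
    (ha_meas : ∀ i, Measurable (a i)) (hs_meas : ∀ i, Measurable (s i))
    (h_indep : iIndepFun (Sum.elim a s) μ)
    (ha_ident : ∀ i, IdentDistrib (a i) (a 0) μ μ) (hs_ident : ∀ i, IdentDistrib (s i) (s 0) μ μ)
    {θ θ' : ℝ} (ha_int : Integrable (fun ω => exp (θ * a 0 ω)) μ)
    (hs_int : Integrable (fun ω => exp (θ' * s 0 ω)) μ) {ε : ℝ} (hε : 0 < ε) (n : ℕ) :
    μ {ω | ε ≤ (range (n + 1)).sup' nonempty_range_add_one fun k => ∏ j ∈ range k,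
        exp (θ * a j ω) * exp (θ' * s j ω) /
          ((∫ ω, exp (θ * a 0 ω) ∂μ) * ∫ ω, exp (θ' * s 0 ω) ∂μ)}
      ≤ ENNReal.ofReal ε⁻¹ := by
  have hf : ∀ i, Measurable (Sum.elim a s i) := Sum.forall.2 ⟨ha_meas, hs_meas⟩
  have hρ : (∫ ω, exp (θ * a 0 ω) ∂μ) * ∫ ω, exp (θ' * s 0 ω) ∂μ ≠ 0 :=
    (mul_pos (integral_exp_pos ha_int) (integral_exp_pos hs_int)).ne'
  have hX_obs (n : ℕ) := (measurable_observedAt_exp_mul_exp_mul (a := a) (s := s) θ θ' n).div_const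
    ((∫ ω, exp (θ * a 0 ω) ∂μ) * ∫ ω, exp (θ' * s 0 ω) ∂μ)
  refine maximal_ineq_prod_range (ℱ := timedFiltration _ _ hf)
    (fun n => (hX_obs n).mono (observedAt_le_timedFiltration_succ hf n) le_rfl)
    (fun n => indep_of_indep_of_le_left (indep_observedAt_timedFiltration hf h_indep n)
      (hX_obs n).comap_le)
    (fun n => (integrable_exp_mul_exp_mul h_indep ha_ident hs_ident ha_int hs_int n).div_const _)
    (fun n => ?_) (fun n ω => by positivity) hε n
  rw [integral_div, integral_exp_mul_exp_mul h_indep ha_ident hs_ident, div_self hρ]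

end IIDIncrements

theorem maximal_inequality_diff_general
    {Ω : Type*} [MeasurableSpace Ω] (μ : Measure Ω) [IsProbabilityMeasure μ]
    (a s : ℕ → Ω → ℝ)
    (ha_meas : ∀ i, Measurable (a i)) (hs_meas : ∀ i, Measurable (s i))
    (h_indep : iIndepFun (Sum.elim a s) μ)
    (ha_ident : ∀ i, IdentDistrib (a i) (a 0) μ μ)
    (hs_ident : ∀ i, IdentDistrib (s i) (s 0) μ μ)
    (A S : ℕ → Ω → ℝ)
    (hA : ∀ t ω, A t ω = ∑ i ∈ Finset.range t, a i ω)
    (hS : ∀ t ω, S t ω = ∑ i ∈ Finset.range t, s i ω)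
    (θstar : ℝ) (hθstar : 0 < θstar)
    (ha_int : Integrable (fun ω => Real.exp (θstar * a 0 ω)) μ)
    (hs_int : Integrable (fun ω => Real.exp (-θstar * s 0 ω)) μ)
    (h_stab : (1 / θstar) * Real.log (∫ ω, Real.exp (θstar * A 1 ω) ∂μ)
          ≤ -(1 / θstar) * Real.log (∫ ω, Real.exp (-θstar * S 1 ω) ∂μ))
    (t : ℕ) (σ : ℝ) :
    μ {ω | σ < (Finset.range (t + 1)).sup' Finset.nonempty_range_add_one
        (fun u => A u ω - S u ω)}
      ≤ ENNReal.ofReal (Real.exp (-θstar * σ)) := by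
  have hρ_le : (∫ ω, exp (θstar * a 0 ω) ∂μ) * ∫ ω, exp (-θstar * s 0 ω) ∂μ ≤ 1 :=
    mul_le_one_of_inv_mul_log_le hθstar (integral_exp_pos ha_int) (integral_exp_pos hs_int)
      (by simpa only [hA, hS, sum_range_one] using h_stab)
  have hmax := maximal_ineq_prod_exp_mul_exp_mul ha_meas hs_meas h_indep ha_ident hs_ident
    ha_int hs_int (exp_pos (θstar * σ)) t
  rw [neg_mul, exp_neg]
  refine (measure_mono fun ω (hω : σ < sup' _ _ _) => ?_).trans hmax
  obtain ⟨u, hu, hσu⟩ := (lt_sup'_iff _).1 hω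
  rw [Set.mem_ofPred_eq]
  refine le_sup'_of_le _ hu ?_
  calc exp (θstar * σ) ≤ exp (θstar * (A u ω - S u ω)) := by gcongr
    _ ≤ _ := by
      rw [hA, hS]
      exact exp_mul_sum_sub_sum_le_prod_div (mul_pos (integral_exp_pos ha_int)
        (integral_exp_pos hs_int)) hρ_le _ _ _ u

/-- Maximal inequality for the difference process: if `(a i)` and `(s i)` are two mutually
independent i.i.d. families, `A t = Σ_{i<t} a i`, `S t = Σ_{i<t} s i`, and `θ* > 0` satisfies
`α(θ*) ≤ β(θ*)` (effective bandwidth at most effective capacity), then for every `t` and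
`σ ≥ 0`, `P{ max_{0 ≤ u ≤ t} (A u − S u) > σ } ≤ exp (−θ* σ)`. -/
theorem maximal_inequality_diff
    {Ω : Type*} [MeasurableSpace Ω] (μ : Measure Ω) [IsProbabilityMeasure μ]
    (a s : ℕ → Ω → ℝ)
    (ha_meas : ∀ i, Measurable (a i)) (hs_meas : ∀ i, Measurable (s i))
    (h_indep : iIndepFun (Sum.elim a s) μ)
    (ha_ident : ∀ i, IdentDistrib (a i) (a 0) μ μ)
    (hs_ident : ∀ i, IdentDistrib (s i) (s 0) μ μ)
    (A S : ℕ → Ω → ℝ)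
    (hA : ∀ t ω, A t ω = ∑ i ∈ Finset.range t, a i ω)
    (hS : ∀ t ω, S t ω = ∑ i ∈ Finset.range t, s i ω)
    (θstar : ℝ) (hθstar : 0 < θstar)
    (ha_int : Integrable (fun ω => Real.exp (θstar * a 0 ω)) μ)
    (hs_int : Integrable (fun ω => Real.exp (-θstar * s 0 ω)) μ)
    (h_stab : (1 / θstar) * Real.log (∫ ω, Real.exp (θstar * A 1 ω) ∂μ)
          ≤ -(1 / θstar) * Real.log (∫ ω, Real.exp (-θstar * S 1 ω) ∂μ))
    (t : ℕ) (σ : ℝ) (hσ : 0 ≤ σ) :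
    μ {ω | σ < (Finset.range (t + 1)).sup' Finset.nonempty_range_add_one
        (fun u => A u ω - S u ω)}
      ≤ ENNReal.ofReal (Real.exp (-θstar * σ)) :=
  maximal_inequality_diff_general μ a s ha_meas hs_meas h_indep ha_ident hs_ident A S hA hS θstar
    hθstar ha_int hs_int h_stab t σ
end

section
/- Let A : ℕ → ℝ and D_1, D_2 : ℕ → ℝ be functions (sample paths of arrivals and departures at two nodes in series) and let S_1, S_2 : {(u,t) : 0 ≤ u ≤ t} → ℝ be bivariate functions. If D_1(t) ≥ inf_{0 ≤ u ≤ t} { A(u) + S_1(u,t) } for all t and D_2(t) ≥ inf_{0 ≤ v ≤ t} { D_1(v) + S_2(v,t) } for all t, then D_2(t) ≥ inf_{0 ≤ u ≤ v ≤ t} { A(u) + S_1(u,v) + S_2(v,t) } for all t; i.e., the tandem of the two servers is a server with service process S_1 ⊗ S_2. -/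
/-! The tandem's output dominates `(A ⊗ S₁) ⊗ S₂`: convolution is monotone in the arrival,
so `(A ⊗ S₁) ⊗ S₂ ≤ D₁ ⊗ S₂ ≤ D₂`, and `(A ⊗ S₁) ⊗ S₂` is the double infimum of the
statement once `S₂ v t` is pulled out of the inner infimum. -/

theorem Finset.inf'_add_right {ι M : Type*} [LinearOrder M] [Add M] [AddRightMono M]
    (s : Finset ι) (hs : s.Nonempty) (f : ι → M) (a : M) :
    s.inf' hs (fun i => f i + a) = s.inf' hs f + a := by
  obtain ⟨i, hi, hmin⟩ := s.exists_mem_eq_inf' hs f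
  refine le_antisymm (hmin ▸ s.inf'_le (fun i => f i + a) hi) ?_
  exact Finset.le_inf' _ _ fun j hj => add_le_add_left (s.inf'_le f hj) a

namespace MinPlus

variable {M : Type*} [LinearOrder M] [Add M] [AddRightMono M]

/-- Discrete-time min-plus convolution `(A ⊗ S) t = min_{u ≤ t} (A u + S u t)`. -/
def conv (A : ℕ → M) (S : ℕ → ℕ → M) (t : ℕ) : M :=
  (Finset.range (t + 1)).inf' Finset.nonempty_range_add_one fun u => A u + S u t

theorem conv_mono_left {A B : ℕ → M} (h : ∀ t, A t ≤ B t) (S : ℕ → ℕ → M) (t : ℕ) :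
    conv A S t ≤ conv B S t :=
  Finset.inf'_mono_fun fun u _ => add_le_add_left (h u) _

theorem conv_conv_eq (A : ℕ → M) (S₁ S₂ : ℕ → ℕ → M) (t : ℕ) :
    conv (conv A S₁) S₂ t =
      (Finset.range (t + 1)).inf' Finset.nonempty_range_add_one fun v =>
        (Finset.range (v + 1)).inf' Finset.nonempty_range_add_one fun u =>
          A u + S₁ u v + S₂ v t := by
  simp only [conv, Finset.inf'_add_right]

theorem conv_conv_le_of_le_of_le {A D₁ D₂ : ℕ → M} {S₁ S₂ : ℕ → ℕ → M}
    (h₁ : ∀ t, conv A S₁ t ≤ D₁ t) (h₂ : ∀ t, conv D₁ S₂ t ≤ D₂ t) (t : ℕ) :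
    conv (conv A S₁) S₂ t ≤ D₂ t :=
  (conv_mono_left h₁ S₂ t).trans (h₂ t)

end MinPlus

/-- Concatenation of two dynamic servers (fixed sample path, discrete time): if
`D₁ t ≥ inf_{0 ≤ u ≤ t} (A u + S₁ u t)` and `D₂ t ≥ inf_{0 ≤ v ≤ t} (D₁ v + S₂ v t)`
for all `t`, then `D₂ t ≥ inf_{0 ≤ u ≤ v ≤ t} (A u + S₁ u v + S₂ v t)` for all `t`;
i.e. the tandem of the two servers is a server with service process `S₁ ⊗ S₂`. -/
theorem tandem_server_min_plus_convolution
    (A D₁ D₂ : ℕ → ℝ) (S₁ S₂ : ℕ → ℕ → ℝ)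
    (h₁ : ∀ t, (Finset.range (t + 1)).inf' Finset.nonempty_range_add_one
        (fun u => A u + S₁ u t) ≤ D₁ t)
    (h₂ : ∀ t, (Finset.range (t + 1)).inf' Finset.nonempty_range_add_one
        (fun v => D₁ v + S₂ v t) ≤ D₂ t) :
    ∀ t, (Finset.range (t + 1)).inf' Finset.nonempty_range_add_one
        (fun v => (Finset.range (v + 1)).inf' Finset.nonempty_range_add_one
          (fun u => A u + S₁ u v + S₂ v t)) ≤ D₂ t := by
  intro t
  rw [← MinPlus.conv_conv_eq]
  exact MinPlus.conv_conv_le_of_le_of_le h₁ h₂ t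
end

section
/- Let F and G be nonnegative independent real random variables, and let f, g : [0,∞) → [0,∞) be nonincreasing functions with P(F > σ) ≤ f(σ) and P(G > σ) ≤ g(σ) for all σ ≥ 0. Set f̃(σ) = 1 − min(1, f(σ)) and g̃(σ) = 1 − min(1, g(σ)), and assume g̃ is right-continuous so that it induces a Lebesgue–Stieltjes measure dg̃. Then for every σ ≥ 0, P{ F + G > σ } ≤ 1 − ∫_{(0,σ]} f̃(σ − u) dg̃(u). -/
/-!
Bound `f̃` by the distribution function of `F`, and note that `dg̃` restricted to `(0, σ]` has
distribution function at most `g̃ - g̃ 0 ≤ g̃`, itself bounded by the distribution function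
of `G`. By Fubini, `∫_{(0,σ]} P(F ≤ σ - u) dg̃(u)` is the value at `(-∞, σ]` of the
convolution of the law of `F` with `dg̃|_(0,σ]`, and convolving with a fixed measure is
monotone for the pointwise order of distribution functions; so it is at most
`(law F ∗ law G)(-∞, σ] = P(F + G ≤ σ)`.
-/

open MeasureTheory ProbabilityTheory Set

lemma ofReal_one_sub_min_le_map_Iic {Ω : Type*} [MeasurableSpace Ω] {μ : Measure Ω}
    [IsProbabilityMeasure μ] {X : Ω → ℝ} (hX : Measurable X) {a c : ℝ} (hc : 0 ≤ c)
    (h_tail : μ {ω | a < X ω} ≤ ENNReal.ofReal c) :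
    ENNReal.ofReal (1 - min 1 c) ≤ μ.map X (Iic a) := by
  have := Measure.isProbabilityMeasure_map (μ := μ) hX.aemeasurable
  have h_Ioi : μ.map X (Iic a)ᶜ ≤ ENNReal.ofReal (min 1 c) := by
    rw [compl_Iic, Measure.map_apply hX measurableSet_Ioi, ENNReal.ofReal_min,
      ENNReal.ofReal_one]
    exact le_min prob_le_one h_tail
  rw [ENNReal.ofReal_sub _ (le_min zero_le_one hc), ENNReal.ofReal_one,
    ← compl_compl (Iic a), prob_compl_eq_one_sub measurableSet_Iic.compl]
  exact tsub_le_tsub_left h_Ioi 1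

lemma StieltjesFunction.measure_Ioc_le_ofReal (S : StieltjesFunction ℝ) {a b : ℝ}
    (ha : 0 ≤ S a) : S.measure (Ioc a b) ≤ ENNReal.ofReal (S b) := by
  rw [S.measure_Ioc]
  exact ENNReal.ofReal_le_ofReal (by linarith)

lemma measure_restrict_Iic_le_map_Iic {Ω : Type*} [MeasurableSpace Ω] {μ : Measure Ω}
    [IsProbabilityMeasure μ] {X : Ω → ℝ} (hX : Measurable X) {g : ℝ → ℝ}
    (hg_nonneg : ∀ a, 0 ≤ a → 0 ≤ g a)
    (hX_tail : ∀ a, 0 ≤ a → μ {ω | a < X ω} ≤ ENNReal.ofReal (g a))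
    {S : StieltjesFunction ℝ} (hS : ∀ a, 0 ≤ a → S a = 1 - min 1 (g a))
    {s : Set ℝ} (hs : s ⊆ Ioi 0) (a : ℝ) :
    S.measure.restrict s (Iic a) ≤ μ.map X (Iic a) := by
  have h_Ioc : S.measure.restrict s (Iic a) ≤ S.measure (Ioc 0 a) := by
    rw [Measure.restrict_apply measurableSet_Iic]
    exact measure_mono fun u hu => ⟨hs hu.2, hu.1⟩
  rcases lt_or_ge a 0 with ha | ha
  · exact h_Ioc.trans (by simp [Ioc_eq_empty (not_lt.2 ha.le)])
  · calc S.measure.restrict s (Iic a) ≤ S.measure (Ioc 0 a) := h_Ioc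
      _ ≤ ENNReal.ofReal (S a) := S.measure_Ioc_le_ofReal (by simp [hS 0 le_rfl])
      _ ≤ μ.map X (Iic a) :=
          hS a ha ▸ ofReal_one_sub_min_le_map_Iic hX (hg_nonneg a ha) (hX_tail a ha)

lemma conv_apply_Iic_eq_lintegral_left (ρ ν : Measure ℝ) [SFinite ρ] [SFinite ν] (σ : ℝ) :
    (ρ ∗ ν) (Iic σ) = ∫⁻ y, ρ (Iic (σ - y)) ∂ν := by
  rw [Measure.conv, Measure.map_apply measurable_add measurableSet_Iic,
    Measure.prod_apply_symm (measurable_add measurableSet_Iic)]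
  congr! with y
  ext x
  simp [le_sub_iff_add_le]

lemma conv_apply_Iic_eq_lintegral_right (ρ ν : Measure ℝ) [SFinite ν] (σ : ℝ) :
    (ρ ∗ ν) (Iic σ) = ∫⁻ x, ν (Iic (σ - x)) ∂ρ := by
  rw [Measure.conv, Measure.map_apply measurable_add measurableSet_Iic,
    Measure.prod_apply (measurable_add measurableSet_Iic)]
  congr! with x
  ext y
  simp [le_sub_iff_add_le']

lemma conv_apply_Iic_mono_right (ρ : Measure ℝ) {ν κ : Measure ℝ} [SFinite ν] [SFinite κ]
    (h : ∀ a, ν (Iic a) ≤ κ (Iic a)) (σ : ℝ) :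
    (ρ ∗ ν) (Iic σ) ≤ (ρ ∗ κ) (Iic σ) := by
  rw [conv_apply_Iic_eq_lintegral_right, conv_apply_Iic_eq_lintegral_right]
  exact lintegral_mono fun x => h (σ - x)

lemma ofReal_integral_le_lintegral_ofReal {α : Type*} [MeasurableSpace α] {μ : Measure α}
    {f : α → ℝ} (hf : ∀ x, 0 ≤ f x) :
    ENNReal.ofReal (∫ x, f x ∂μ) ≤ ∫⁻ x, ENNReal.ofReal (f x) ∂μ := by
  calc ENNReal.ofReal (∫ x, f x ∂μ) ≤ ‖∫ x, f x ∂μ‖ₑ := Real.ofReal_le_enorm _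
    _ ≤ ∫⁻ x, ‖f x‖ₑ ∂μ := enorm_integral_le_lintegral_enorm f
    _ = ∫⁻ x, ENNReal.ofReal (f x) ∂μ := by simp_rw [Real.enorm_of_nonneg (hf _)]

lemma one_sub_ofReal_le_ofReal_one_sub (r : ℝ) :
    1 - ENNReal.ofReal r ≤ ENNReal.ofReal (1 - r) := by
  rw [tsub_le_iff_right, ← ENNReal.ofReal_one]
  exact (ENNReal.ofReal_le_ofReal (by linarith)).trans
    (ENNReal.ofReal_add_le (p := 1 - r) (q := r))

theorem tail_bound_sum_indep_general
    {Ω : Type*} [MeasurableSpace Ω] (μ : Measure Ω) [IsProbabilityMeasure μ]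
    (F G : Ω → ℝ) (hF_meas : Measurable F) (hG_meas : Measurable G)
    (h_indep : IndepFun F G μ)
    (f g : ℝ → ℝ)
    (hf_nonneg : ∀ σ : ℝ, 0 ≤ σ → 0 ≤ f σ)
    (hg_nonneg : ∀ σ : ℝ, 0 ≤ σ → 0 ≤ g σ)
    (hF_tail : ∀ σ : ℝ, 0 ≤ σ → μ {ω | σ < F ω} ≤ ENNReal.ofReal (f σ))
    (hG_tail : ∀ σ : ℝ, 0 ≤ σ → μ {ω | σ < G ω} ≤ ENNReal.ofReal (g σ))
    (Gtilde : StieltjesFunction ℝ) (hGtilde : ∀ σ : ℝ, 0 ≤ σ → Gtilde σ = 1 - min 1 (g σ))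
    (σ : ℝ) :
    μ {ω | σ < F ω + G ω}
      ≤ ENNReal.ofReal
          (1 - ∫ u in Set.Ioc (0 : ℝ) σ, (1 - min 1 (f (σ - u))) ∂Gtilde.measure) := by
  set ν := Gtilde.measure.restrict (Ioc 0 σ)
  have h_dom : ∀ a, ν (Iic a) ≤ μ.map G (Iic a) :=
    measure_restrict_Iic_le_map_Iic hG_meas hg_nonneg hG_tail hGtilde fun _ hu => hu.1
  have h_sum : μ {ω | σ < F ω + G ω} = 1 - (μ.map F ∗ μ.map G) (Iic σ) := by
    rw [← h_indep.map_add_eq_map_conv_map hF_meas hG_meas,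
      Measure.map_apply (hF_meas.add hG_meas) measurableSet_Iic,
      ← prob_compl_eq_one_sub (hF_meas.add hG_meas measurableSet_Iic)]
    congr 1
    ext ω
    simp
  calc μ {ω | σ < F ω + G ω} = 1 - (μ.map F ∗ μ.map G) (Iic σ) := h_sum
    _ ≤ 1 - (μ.map F ∗ ν) (Iic σ) :=
        tsub_le_tsub_left (conv_apply_Iic_mono_right _ h_dom σ) 1
    _ = 1 - ∫⁻ u, μ.map F (Iic (σ - u)) ∂ν := by rw [conv_apply_Iic_eq_lintegral_left]
    _ ≤ 1 - ∫⁻ u, ENNReal.ofReal (1 - min 1 (f (σ - u))) ∂ν := by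
        refine tsub_le_tsub_left (setLIntegral_mono' measurableSet_Ioc fun u hu => ?_) 1
        have hu' : 0 ≤ σ - u := sub_nonneg.2 hu.2
        exact ofReal_one_sub_min_le_map_Iic hF_meas (hf_nonneg _ hu') (hF_tail _ hu')
    _ ≤ 1 - ENNReal.ofReal (∫ u, (1 - min 1 (f (σ - u))) ∂ν) :=
        tsub_le_tsub_left (ofReal_integral_le_lintegral_ofReal fun u =>
          sub_nonneg.2 (min_le_left _ _)) 1
    _ ≤ _ := one_sub_ofReal_le_ofReal_one_sub _

/-- Tail bound for a sum of two independent nonnegative random variables via a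
Lebesgue–Stieltjes convolution of the individual tail bounds (Lemma 4.1 of Jiang):
if `P(F > σ) ≤ f σ` and `P(G > σ) ≤ g σ` with `f, g` nonincreasing on `[0,∞)`,
`f̃ σ = 1 − min 1 (f σ)`, `g̃ σ = 1 − min 1 (g σ)` and `g̃` (extended as the right-continuous
nondecreasing function `Gtilde`) induces a Lebesgue–Stieltjes measure, then
`P(F + G > σ) ≤ 1 − ∫_{(0,σ]} f̃(σ − u) dGtilde(u)`. -/
theorem tail_bound_sum_indep
    {Ω : Type*} [MeasurableSpace Ω] (μ : Measure Ω) [IsProbabilityMeasure μ]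
    (F G : Ω → ℝ) (hF_meas : Measurable F) (hG_meas : Measurable G)
    (hF_nonneg : ∀ᵐ ω ∂μ, 0 ≤ F ω) (hG_nonneg : ∀ᵐ ω ∂μ, 0 ≤ G ω)
    (h_indep : IndepFun F G μ)
    (f g : ℝ → ℝ)
    (hf_anti : AntitoneOn f (Set.Ici (0 : ℝ)))
    (hg_anti : AntitoneOn g (Set.Ici (0 : ℝ)))
    (hf_nonneg : ∀ σ : ℝ, 0 ≤ σ → 0 ≤ f σ)
    (hg_nonneg : ∀ σ : ℝ, 0 ≤ σ → 0 ≤ g σ)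
    (hF_tail : ∀ σ : ℝ, 0 ≤ σ → μ {ω | σ < F ω} ≤ ENNReal.ofReal (f σ))
    (hG_tail : ∀ σ : ℝ, 0 ≤ σ → μ {ω | σ < G ω} ≤ ENNReal.ofReal (g σ))
    (Gtilde : StieltjesFunction ℝ) (hGtilde : ∀ σ : ℝ, 0 ≤ σ → Gtilde σ = 1 - min 1 (g σ))
    (σ : ℝ) (hσ : 0 ≤ σ) :
    μ {ω | σ < F ω + G ω}
      ≤ ENNReal.ofReal
          (1 - ∫ u in Set.Ioc (0 : ℝ) σ, (1 - min 1 (f (σ - u))) ∂Gtilde.measure) :=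
  tail_bound_sum_indep_general μ F G hF_meas hG_meas h_indep f g hf_nonneg hg_nonneg hF_tail hG_tail
    Gtilde hGtilde σ
end

section
/- Let F_1, …, F_n be mutually independent nonnegative real random variables and θ > 0 such that P(F_i > σ) ≤ e^{−θ σ} for every σ ≥ 0 and every i. Then for every σ ≥ 0, P{ F_1 + ⋯ + F_n > σ } ≤ e^{−θ σ} Σ_{h=0}^{n−1} (θ σ)^h / h! (the tail of the Erlang/Gamma(n, θ) distribution). -/
open MeasureTheory ProbabilityTheory

/-!
Induction on the number of summands. If `X` has tail at most `erlangTail θ (m + 1)` and `Y ≥ 0`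
is independent of `X` with tail at most `e^{-θt}`, then
`P(Y + X > σ) = E[P(X > σ - y)|_{y = Y}] ≤ E[φ(Y)]` with
`φ(y) = erlangTail θ (m + 1) (σ - min y σ)`.
The function `φ` is nondecreasing, so by the layer cake formula
`E[φ(Y)] = φ(0) + ∫₀^σ φ'(t) P(Y > t) dt ≤ φ(0) + ∫₀^σ φ'(t) e^{-θt} dt`,
and the right-hand side is `erlangTail θ (m + 2) σ` (the case of an exponential `Y`).
-/

open Set Real
open scoped Nat

noncomputable def erlangTail (θ : ℝ) (n : ℕ) (u : ℝ) : ℝ :=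
  exp (-θ * u) * ∑ h ∈ Finset.range n, (θ * u) ^ h / h !

/-- The density on `u ≥ 0` of the Erlang law with shape `m + 1` (not `m`) and rate `θ`. -/
noncomputable def erlangDensity (θ : ℝ) (m : ℕ) (u : ℝ) : ℝ :=
  θ * exp (-θ * u) * (θ * u) ^ m / m !

section Calculus

variable {θ : ℝ}

lemma erlangTail_succ (n : ℕ) (u : ℝ) :
    erlangTail θ (n + 1) u = erlangTail θ n u + exp (-θ * u) * (θ * u) ^ n / n ! := by
  simp only [erlangTail, Finset.sum_range_succ, mul_add, mul_div_assoc]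

lemma erlangTail_succ_zero (m : ℕ) : erlangTail θ (m + 1) 0 = 1 := by
  simp [erlangTail, Finset.sum_range_succ']

lemma erlangTail_nonneg (n : ℕ) {u : ℝ} (h : 0 ≤ θ * u) : 0 ≤ erlangTail θ n u := by
  unfold erlangTail; positivity

lemma erlangDensity_nonneg (m : ℕ) {u : ℝ} (hθ : 0 ≤ θ) (hu : 0 ≤ u) :
    0 ≤ erlangDensity θ m u := by
  unfold erlangDensity; positivity

lemma hasDerivAt_erlangTail (m : ℕ) (u : ℝ) :
    HasDerivAt (erlangTail θ (m + 1)) (-erlangDensity θ m u) u := by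
  have hexp : HasDerivAt (fun u => exp (-θ * u)) (exp (-θ * u) * (-θ * 1)) u :=
    ((hasDerivAt_id u).const_mul (-θ)).exp
  induction m with
  | zero =>
    have hone : erlangTail θ 1 = fun u => exp (-θ * u) := by
      funext v; simp [erlangTail]
    rw [hone]
    exact hexp.congr_deriv (by simp [erlangDensity, mul_comm])
  | succ m ih =>
    have hterm : HasDerivAt (fun u => exp (-θ * u) * (θ * u) ^ (m + 1) / (m + 1)!)
        (erlangDensity θ m u - erlangDensity θ (m + 1) u) u := by
      have hpow := ((hasDerivAt_id' u).const_mul θ).fun_pow (m + 1)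
      refine ((hexp.mul hpow).div_const ((m + 1)! : ℝ)).congr_deriv ?_
      simp only [erlangDensity, Nat.factorial_succ, Nat.cast_mul, Nat.add_sub_cancel]
      field_simp
      push_cast
      ring
    have hsucc : erlangTail θ (m + 1 + 1) =
        fun v => erlangTail θ (m + 1) v + exp (-θ * v) * (θ * v) ^ (m + 1) / (m + 1)! :=
      funext fun v => erlangTail_succ _ _
    rw [hsucc]
    exact (ih.fun_add hterm).congr_deriv (by ring)

lemma erlangTail_sub_eq_add_integral (m : ℕ) (σ c : ℝ) :
    erlangTail θ (m + 1) (σ - c)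
      = erlangTail θ (m + 1) σ + ∫ t in 0..c, erlangDensity θ m (σ - t) := by
  have hderiv : ∀ t, HasDerivAt (fun t => erlangTail θ (m + 1) (σ - t))
      (erlangDensity θ m (σ - t)) t := fun t =>
    ((hasDerivAt_erlangTail m (σ - t)).comp t ((hasDerivAt_id' t).const_sub σ)).congr_deriv
      (by ring)
  have hcont : Continuous fun t => erlangDensity θ m (σ - t) := by unfold erlangDensity; fun_prop
  rw [intervalIntegral.integral_eq_sub_of_hasDerivAt (fun t _ => hderiv t)
    (hcont.intervalIntegrable 0 c)]
  simp

lemma integral_exp_mul_erlangDensity_sub (m : ℕ) (σ : ℝ) :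
    ∫ t in 0..σ, exp (-θ * t) * erlangDensity θ m (σ - t)
      = exp (-θ * σ) * (θ * σ) ^ (m + 1) / (m + 1)! := by
  have hexp : ∀ t, exp (-θ * t) * exp (-θ * (σ - t)) = exp (-θ * σ) := fun t => by
    rw [← exp_add]; ring_nf
  have hpoint : ∀ t, exp (-θ * t) * erlangDensity θ m (σ - t)
      = θ ^ (m + 1) * exp (-θ * σ) / m ! * (σ - t) ^ m := fun t => by
    rw [← hexp t, erlangDensity, mul_pow]; ring
  simp_rw [hpoint]
  rw [intervalIntegral.integral_const_mul,
    intervalIntegral.integral_comp_sub_left (fun x => x ^ m) σ]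
  simp only [sub_self, sub_zero, integral_pow, Nat.factorial_succ, Nat.cast_mul]
  field_simp
  push_cast
  ring

lemma setLIntegral_exp_mul_erlangDensity (hθ : 0 ≤ θ) (m : ℕ) {σ : ℝ} (hσ : 0 ≤ σ) :
    ∫⁻ t in Ioc 0 σ,
        ENNReal.ofReal (exp (-θ * t)) * ENNReal.ofReal (erlangDensity θ m (σ - t))
      = ENNReal.ofReal (exp (-θ * σ) * (θ * σ) ^ (m + 1) / (m + 1)!) := by
  have hcont : Continuous fun t => exp (-θ * t) * erlangDensity θ m (σ - t) := by
    unfold erlangDensity; fun_prop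
  have hnn : ∀ t ∈ Ioc 0 σ, 0 ≤ exp (-θ * t) * erlangDensity θ m (σ - t) := fun t ht =>
    mul_nonneg (exp_nonneg _) (erlangDensity_nonneg m hθ (sub_nonneg.2 ht.2))
  simp_rw [← ENNReal.ofReal_mul (exp_nonneg _)]
  rw [← ofReal_integral_eq_lintegral_ofReal hcont.integrableOn_Ioc
    (ae_restrict_of_forall_mem measurableSet_Ioc hnn), ← intervalIntegral.integral_of_le hσ,
    integral_exp_mul_erlangDensity_sub]

end Calculus

section Probability

variable {Ω : Type*} [MeasurableSpace Ω] {μ : Measure Ω}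

lemma lintegral_ofReal_integral_min_le {Y : Ω → ℝ} (hY : AEMeasurable Y μ)
    (hY0 : ∀ᵐ ω ∂μ, 0 ≤ Y ω) {σ : ℝ} (hσ : 0 ≤ σ) {g τ : ℝ → ℝ}
    (hg : IntegrableOn g (Icc 0 σ)) (hg0 : ∀ t ∈ Icc 0 σ, 0 ≤ g t)
    (htail : ∀ t ∈ Ioc 0 σ, μ {ω | t < Y ω} ≤ ENNReal.ofReal (τ t)) :
    ∫⁻ ω, ENNReal.ofReal (∫ t in 0..min (Y ω) σ, g t) ∂μ
      ≤ ∫⁻ t in Ioc 0 σ, ENNReal.ofReal (τ t) * ENNReal.ofReal (g t) := by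
  set g' := (Icc 0 σ).indicator g
  have hint : ∀ c ∈ Icc 0 σ, ∫ t in 0..c, g t = ∫ t in 0..c, g' t := fun c hc =>
    intervalIntegral.integral_congr fun t ht => by
      rw [uIcc_of_le hc.1] at ht
      exact (indicator_of_mem (mem_Icc.2 ⟨ht.1, ht.2.trans hc.2⟩) g).symm
  have hmin : ∀ᵐ ω ∂μ, min (Y ω) σ ∈ Icc 0 σ := by
    filter_upwards [hY0] with ω hω using mem_Icc.2 ⟨le_min hω hσ, min_le_right _ _⟩
  calc ∫⁻ ω, ENNReal.ofReal (∫ t in 0..min (Y ω) σ, g t) ∂μ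
      = ∫⁻ ω, ENNReal.ofReal (∫ t in 0..min (Y ω) σ, g' t) ∂μ := by
        refine lintegral_congr_ae ?_
        filter_upwards [hmin] with ω hω
        rw [hint _ hω]
    _ = ∫⁻ t in Ioi 0, μ {ω | t < min (Y ω) σ} * ENNReal.ofReal (g' t) :=
        lintegral_comp_eq_lintegral_meas_lt_mul μ (hmin.mono fun _ h => h.1)
          (hY.min aemeasurable_const)
          (fun _ _ => (hg.integrable_indicator measurableSet_Icc).intervalIntegrable)
          (ae_of_all _ (indicator_nonneg hg0))
    _ ≤ ∫⁻ t in Ioi 0, (Ioc 0 σ).indicator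
          (fun t => ENNReal.ofReal (τ t) * ENNReal.ofReal (g t)) t := by
        refine lintegral_mono_ae ((ae_restrict_mem measurableSet_Ioi).mono fun t (ht : 0 < t) => ?_)
        by_cases htσ : t ≤ σ
        · rw [indicator_of_mem (mem_Ioc.2 ⟨ht, htσ⟩),
            show g' t = g t from indicator_of_mem (mem_Icc.2 ⟨ht.le, htσ⟩) g]
          gcongr
          have hsub : {ω | t < min (Y ω) σ} ⊆ {ω | t < Y ω} := fun ω hω =>
            (show t < min (Y ω) σ from hω).trans_le (min_le_left _ _)
          exact (measure_mono hsub).trans (htail t ⟨ht, htσ⟩)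
        · have hempty : {ω | t < min (Y ω) σ} = ∅ := by
            ext ω; simp [(not_le.1 htσ).le.not_gt]
          simp only [hempty, measure_empty, zero_mul, zero_le]
    _ ≤ ∫⁻ t, (Ioc 0 σ).indicator
          (fun t => ENNReal.ofReal (τ t) * ENNReal.ofReal (g t)) t :=
        setLIntegral_le_lintegral _ _
    _ = ∫⁻ t in Ioc 0 σ, ENNReal.ofReal (τ t) * ENNReal.ofReal (g t) :=
        lintegral_indicator measurableSet_Ioc _

lemma ProbabilityTheory.IndepFun.measure_lt_add [IsFiniteMeasure μ] {X Y : Ω → ℝ}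
    (hind : IndepFun Y X μ) (hY : Measurable Y) (hX : Measurable X) (σ : ℝ) :
    μ {ω | σ < Y ω + X ω} = ∫⁻ ω, μ {ω' | σ - Y ω < X ω'} ∂μ := by
  set S := {p : ℝ × ℝ | σ < p.1 + p.2}
  have hS : MeasurableSet S := measurableSet_lt measurable_const (measurable_fst.add measurable_snd)
  have hmap := (indepFun_iff_map_prod_eq_prod_map_map hY.aemeasurable hX.aemeasurable).1 hind
  calc μ {ω | σ < Y ω + X ω} = μ.map (fun ω => (Y ω, X ω)) S :=
        (Measure.map_apply (hY.prodMk hX) hS).symm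
    _ = ∫⁻ y, μ.map X (Prod.mk y ⁻¹' S) ∂(μ.map Y) := by rw [hmap, Measure.prod_apply hS]
    _ = ∫⁻ ω, μ.map X (Prod.mk (Y ω) ⁻¹' S) ∂μ :=
        lintegral_map (measurable_measure_prodMk_left hS) hY
    _ = ∫⁻ ω, μ {ω' | σ - Y ω < X ω'} ∂μ := by
        congr with ω
        rw [Measure.map_apply hX (measurable_prodMk_left hS)]
        congr 1
        ext ω'
        simp [S, sub_lt_iff_lt_add']

lemma measure_lt_add_le_erlangTail_succ [IsProbabilityMeasure μ] {X Y : Ω → ℝ}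
    (hX : Measurable X) (hY : Measurable Y) (hY0 : ∀ᵐ ω ∂μ, 0 ≤ Y ω)
    (hind : IndepFun Y X μ) {θ : ℝ} (hθ : 0 ≤ θ) {m : ℕ}
    (hXtail : ∀ t, 0 ≤ t → μ {ω | t < X ω} ≤ ENNReal.ofReal (erlangTail θ (m + 1) t))
    (hYtail : ∀ t, 0 ≤ t → μ {ω | t < Y ω} ≤ ENNReal.ofReal (exp (-θ * t)))
    {σ : ℝ} (hσ : 0 ≤ σ) :
    μ {ω | σ < Y ω + X ω} ≤ ENNReal.ofReal (erlangTail θ (m + 2) σ) := by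
  set g := fun t => erlangDensity θ m (σ - t)
  have hg0 : ∀ t ∈ Icc 0 σ, 0 ≤ g t := fun t ht =>
    erlangDensity_nonneg m hθ (sub_nonneg.2 ht.2)
  have hg : IntegrableOn g (Icc 0 σ) := by
    refine Continuous.integrableOn_Icc ?_
    unfold g erlangDensity; fun_prop
  have hcond : ∀ y, 0 ≤ y → μ {ω | σ - y < X ω}
      ≤ ENNReal.ofReal (erlangTail θ (m + 1) σ)
        + ENNReal.ofReal (∫ t in 0..min y σ, g t) := by
    intro y hy
    have hint : 0 ≤ ∫ t in 0..min y σ, g t := intervalIntegral.integral_nonneg (le_min hy hσ)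
      fun t ht => hg0 t ⟨ht.1, ht.2.trans (min_le_right _ _)⟩
    rw [← ENNReal.ofReal_add (erlangTail_nonneg _ (mul_nonneg hθ hσ)) hint,
      ← erlangTail_sub_eq_add_integral]
    rcases le_total y σ with hyσ | hσy
    · rw [min_eq_left hyσ]
      exact hXtail _ (sub_nonneg.2 hyσ)
    · rw [min_eq_right hσy, sub_self, erlangTail_succ_zero, ENNReal.ofReal_one]
      exact prob_le_one
  calc μ {ω | σ < Y ω + X ω} = ∫⁻ ω, μ {ω' | σ - Y ω < X ω'} ∂μ :=
        hind.measure_lt_add hY hX σ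
    _ ≤ ∫⁻ ω, (ENNReal.ofReal (erlangTail θ (m + 1) σ)
          + ENNReal.ofReal (∫ t in 0..min (Y ω) σ, g t)) ∂μ :=
        lintegral_mono_ae (hY0.mono fun ω hω => hcond _ hω)
    _ = ENNReal.ofReal (erlangTail θ (m + 1) σ)
          + ∫⁻ ω, ENNReal.ofReal (∫ t in 0..min (Y ω) σ, g t) ∂μ := by
        rw [lintegral_add_left measurable_const, lintegral_const, measure_univ, mul_one]
    _ ≤ ENNReal.ofReal (erlangTail θ (m + 1) σ)
          + ∫⁻ t in Ioc 0 σ, ENNReal.ofReal (exp (-θ * t)) * ENNReal.ofReal (g t) := by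
        gcongr
        exact lintegral_ofReal_integral_min_le hY.aemeasurable hY0 hσ hg hg0
          fun t ht => hYtail t ht.1.le
    _ = ENNReal.ofReal (erlangTail θ (m + 2) σ) := by
        rw [setLIntegral_exp_mul_erlangDensity hθ m hσ, ← ENNReal.ofReal_add
          (erlangTail_nonneg _ (mul_nonneg hθ hσ)) (by positivity), ← erlangTail_succ]

lemma measure_lt_sum_le_erlangTail [IsProbabilityMeasure μ] {ι : Type*} {F : ι → Ω → ℝ}
    (hF_meas : ∀ i, Measurable (F i)) (hF_nonneg : ∀ i, ∀ᵐ ω ∂μ, 0 ≤ F i ω)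
    (h_indep : iIndepFun F μ) {θ : ℝ} (hθ : 0 ≤ θ)
    (h_tail : ∀ i, ∀ t : ℝ, 0 ≤ t →
      μ {ω | t < F i ω} ≤ ENNReal.ofReal (exp (-θ * t)))
    {s : Finset ι} (hs : s.Nonempty) {σ : ℝ} (hσ : 0 ≤ σ) :
    μ {ω | σ < ∑ i ∈ s, F i ω} ≤ ENNReal.ofReal (erlangTail θ s.card σ) := by
  induction hs using Finset.Nonempty.cons_induction generalizing σ with
  | singleton a => simpa [erlangTail] using h_tail a σ hσ
  | cons a s ha hs ih =>
    obtain ⟨m, hm⟩ : ∃ m, s.card = m + 1 := Nat.exists_eq_add_one.2 hs.card_pos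
    have hind : IndepFun (F a) (fun ω => ∑ i ∈ s, F i ω) μ := by
      simpa only [Finset.sum_fn] using (h_indep.indepFun_finsetSum_of_notMem hF_meas ha).symm
    simp only [Finset.sum_cons, Finset.card_cons, hm]
    exact measure_lt_add_le_erlangTail_succ (Finset.measurable_sum _ fun i _ => hF_meas i)
      (hF_meas a) (hF_nonneg a) hind hθ (fun t ht => hm ▸ ih ht) (h_tail a) hσ

end Probability

/-- Erlang tail bound for a sum of independent nonnegative random variables with
exponential tail bounds: if `P(Fᵢ > σ) ≤ exp (−θ σ)` for all `σ ≥ 0` and all `i`, and the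
`Fᵢ` are mutually independent and nonnegative, then
`P(F₁ + ⋯ + Fₙ > σ) ≤ exp (−θ σ) Σ_{h=0}^{n−1} (θ σ)^h / h!`. -/
theorem erlang_tail_bound_sum
    {Ω : Type*} [MeasurableSpace Ω] (μ : Measure Ω) [IsProbabilityMeasure μ]
    (n : ℕ) (hn : 1 ≤ n)
    (F : Fin n → Ω → ℝ) (hF_meas : ∀ i, Measurable (F i))
    (hF_nonneg : ∀ i, ∀ᵐ ω ∂μ, 0 ≤ F i ω)
    (h_indep : iIndepFun F μ)
    (θ : ℝ) (hθ : 0 < θ)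
    (h_tail : ∀ i, ∀ σ : ℝ, 0 ≤ σ → μ {ω | σ < F i ω} ≤ ENNReal.ofReal (Real.exp (-θ * σ)))
    (σ : ℝ) (hσ : 0 ≤ σ) :
    μ {ω | σ < ∑ i, F i ω}
      ≤ ENNReal.ofReal
          (Real.exp (-θ * σ) * ∑ h ∈ Finset.range n, (θ * σ) ^ h / Nat.factorial h) := by
  have huniv : (Finset.univ : Finset (Fin n)).Nonempty :=
    Finset.univ_nonempty_iff.2 ⟨⟨0, hn⟩⟩
  simpa [erlangTail] using
    measure_lt_sum_le_erlangTail hF_meas hF_nonneg h_indep hθ.le h_tail huniv hσ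
end

section
/- (Single-node backlog bound, Theorem 1 with H = 1.) Let (a_i)_{i≥1} and (s_i)_{i≥1} be two mutually independent families of i.i.d. nonnegative random variables, let A(u,t) = Σ_{i=u+1}^{t} a_i and S(u,t) = Σ_{i=u+1}^{t} s_i (with A(t) = A(0,t)), and let α(θ) = (1/θ) log E[e^{θ A(0,1)}] and β(θ) = −(1/θ) log E[e^{−θ S(0,1)}]. Let D be a random process satisfying, for every sample path, inf_{0 ≤ u ≤ t} { A(u) + S(u,t) } ≤ D(t) ≤ A(t) for all t. If θ* > 0 satisfies E[e^{θ* a_1}] < ∞, E[e^{−θ* s_1}] < ∞ and α(θ*) ≤ β(θ*), then the backlog B(t) = A(t) − D(t) satisfies, for every t ∈ ℕ and x ≥ 0, P{ B(t) > x } ≤ e^{−θ* x}. -/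
/-!
Since `D t ≥ A u + S(u, t)` for a minimising `u`, the backlog is at most
`M t = max_{u ≤ t} ∑_{u ≤ i < t} (a i - s i)`. This maximum obeys Lindley's recursion
`M (t + 1) = max 0 ((a t - s t) + M t)` with `a t - s t` independent of `M t`, and
`α θ* ≤ β θ*` says exactly that `E[exp (θ* (a t - s t))] ≤ 1`. Integrating the tail bound
`P(M t > x - y) ≤ exp (-θ* (x - y))` against the law of `a t - s t` therefore carries
`P(M t > x) ≤ exp (-θ* x)` from `t` to `t + 1`.
-/

open MeasureTheory ProbabilityTheory Finset Real

section SuffixSums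

variable {Ω : Type*}

def suffixSumSup (X : ℕ → Ω → ℝ) (t : ℕ) (ω : Ω) : ℝ :=
  (range (t + 1)).sup' nonempty_range_add_one fun u => ∑ i ∈ Ico u t, X i ω

@[simp]
lemma suffixSumSup_zero (X : ℕ → Ω → ℝ) (ω : Ω) : suffixSumSup X 0 ω = 0 := by
  simp [suffixSumSup]

lemma suffixSumSup_succ (X : ℕ → Ω → ℝ) (t : ℕ) (ω : Ω) :
    suffixSumSup X (t + 1) ω = max 0 (X t ω + suffixSumSup X t ω) := by
  have hsum : ∀ u ∈ range (t + 1),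
      ∑ i ∈ Ico u (t + 1), X i ω = X t ω + ∑ i ∈ Ico u t, X i ω :=
    fun u hu => by rw [sum_Ico_succ_top (mem_range_succ_iff.mp hu), add_comm]
  apply le_antisymm
  · refine sup'_le _ _ fun u hu => ?_
    rcases (mem_range_succ_iff.mp hu).lt_or_eq with hut | rfl
    · rw [hsum u (mem_range.mpr hut)]
      exact le_max_of_le_right <| by
        gcongr
        exact le_sup' (fun u => ∑ i ∈ Ico u t, X i ω) (mem_range.mpr hut)
    · simp
  · refine max_le ?_ ?_
    · calc (0 : ℝ) = ∑ i ∈ Ico (t + 1) (t + 1), X i ω := by simp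
        _ ≤ _ := le_sup' (fun u => ∑ i ∈ Ico u (t + 1), X i ω) (self_mem_range_succ (t + 1))
    · obtain ⟨u, hu, hmax⟩ := exists_mem_eq_sup' nonempty_range_add_one
        fun u => ∑ i ∈ Ico u t, X i ω
      rw [suffixSumSup, hmax, ← hsum u hu]
      exact le_sup' (fun u => ∑ i ∈ Ico u (t + 1), X i ω) (mem_range_succ_iff.mpr
        (Nat.le_succ_of_le (mem_range_succ_iff.mp hu)))

lemma sum_range_sub_le_suffixSumSup (a s : ℕ → Ω → ℝ) (t : ℕ) (ω : Ω) {d : ℝ}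
    (hd : (range (t + 1)).inf' nonempty_range_add_one
        (fun u => (∑ i ∈ range u, a i ω) + ∑ i ∈ Ico u t, s i ω) ≤ d) :
    (∑ i ∈ range t, a i ω) - d ≤ suffixSumSup (a - s) t ω := by
  obtain ⟨u, hu, hmin⟩ := exists_mem_eq_inf' nonempty_range_add_one
    fun u => (∑ i ∈ range u, a i ω) + ∑ i ∈ Ico u t, s i ω
  have hsplit := sum_range_add_sum_Ico (fun i => a i ω) (mem_range_succ_iff.mp hu)
  calc (∑ i ∈ range t, a i ω) - d ≤ ∑ i ∈ Ico u t, (a - s) i ω := by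
        simp only [Pi.sub_apply, sum_sub_distrib]
        linarith
    _ ≤ suffixSumSup (a - s) t ω := le_sup' (fun u => ∑ i ∈ Ico u t, (a - s) i ω) hu

variable [mΩ : MeasurableSpace Ω]

lemma measurable_suffixSumSup {X : ℕ → Ω → ℝ} {t : ℕ}
    (hX : ∀ i < t, Measurable (X i)) :
    Measurable (suffixSumSup X t) :=
  measurable_range_sup'' fun _ _ =>
    Finset.measurable_sum _ fun _ hi => hX _ (mem_Ico.mp hi).2

end SuffixSums

lemma mul_le_one_of_inv_mul_log_le_s13 {θ p q : ℝ} (hθ : 0 < θ) (hp : 0 < p) (hq : 0 < q)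
    (h : 1 / θ * log p ≤ -(1 / θ) * log q) : p * q ≤ 1 := by
  rw [← log_nonpos_iff (by positivity), log_mul hp.ne' hq.ne']
  have := mul_le_mul_of_nonneg_left h hθ.le
  field_simp at this
  linarith

namespace ProbabilityTheory

variable {Ω : Type*} [MeasurableSpace Ω] {μ : Measure Ω}

lemma IdentDistrib.mgf_eq {X Y : Ω → ℝ} (h : IdentDistrib X Y μ μ) (θ : ℝ) :
    mgf X μ θ = mgf Y μ θ :=
  (h.comp (measurable_const_mul θ).exp).integral_eq

lemma IdentDistrib.integrable_exp_mul_iff {X Y : Ω → ℝ} (h : IdentDistrib X Y μ μ)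
    (θ : ℝ) :
    Integrable (fun ω => exp (θ * X ω)) μ ↔ Integrable (fun ω => exp (θ * Y ω)) μ :=
  (h.comp (measurable_const_mul θ).exp).integrable_iff

lemma IndepFun.mgf_sub {X Y : Ω → ℝ} (hXY : IndepFun X Y μ) {θ : ℝ}
    (hX : Integrable (fun ω => exp (θ * X ω)) μ)
    (hY : Integrable (fun ω => exp (-θ * Y ω)) μ) :
    mgf (X - Y) μ θ = mgf X μ θ * mgf Y μ (-θ) := by
  rw [sub_eq_add_neg, hXY.neg_right.mgf_add hX.aestronglyMeasurable, mgf_neg]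
  simpa [mul_neg, neg_mul] using hY.aestronglyMeasurable

lemma IndepFun.integrable_exp_mul_sub {X Y : Ω → ℝ} (hXY : IndepFun X Y μ) {θ : ℝ}
    (hX : Integrable (fun ω => exp (θ * X ω)) μ)
    (hY : Integrable (fun ω => exp (-θ * Y ω)) μ) :
    Integrable (fun ω => exp (θ * (X - Y) ω)) μ := by
  rw [sub_eq_add_neg]
  exact hXY.neg_right.integrable_exp_mul_add hX (by simpa [mul_neg, neg_mul] using hY)

lemma mgf_sub_le_one [IsProbabilityMeasure μ] {X Y : Ω → ℝ} (hXY : IndepFun X Y μ) {θ : ℝ}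
    (hθ : 0 < θ)
    (hX : Integrable (fun ω => exp (θ * X ω)) μ)
    (hY : Integrable (fun ω => exp (-θ * Y ω)) μ)
    (h_stab : 1 / θ * log (mgf X μ θ) ≤ -(1 / θ) * log (mgf Y μ (-θ))) :
    mgf (X - Y) μ θ ≤ 1 := by
  rw [hXY.mgf_sub hX hY]
  exact mul_le_one_of_inv_mul_log_le_s13 hθ (mgf_pos hX) (mgf_pos hY) h_stab

lemma indepFun_sub_suffixSumSup {a s : ℕ → Ω → ℝ} (ha : ∀ i, Measurable (a i))
    (hs : ∀ i, Measurable (s i)) (h_indep : iIndepFun (Sum.elim a s) μ) (t : ℕ) :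
    IndepFun ((a - s) t) (suffixSumSup (a - s) t) μ := by
  set m : ℕ ⊕ ℕ → MeasurableSpace Ω := fun z =>
    MeasurableSpace.comap (Sum.elim a s z) inferInstance
  have hm_le : ∀ z, m z ≤ ‹MeasurableSpace Ω› :=
    Sum.forall.2 ⟨fun i => (ha i).comap_le, fun i => (hs i).comap_le⟩
  have hdisj : Disjoint ({Sum.inl t, Sum.inr t} : Set (ℕ ⊕ ℕ)) {z | Sum.elim id id z < t} :=
    Set.disjoint_left.2 (by rintro _ (rfl | rfl) h <;> simp at h)
  -- the pair at time `t` against all earlier pairs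
  have key := indep_iSup_of_disjoint hm_le h_indep.iIndep hdisj
  have hmeas : ∀ {T : Set (ℕ ⊕ ℕ)} {i}, Sum.inl i ∈ T → Sum.inr i ∈ T →
      Measurable[⨆ z ∈ T, m z] ((a - s) i) := fun hl hr =>
    ((comap_measurable _).mono (le_iSup₂ (f := fun z _ => m z) _ hl) le_rfl).sub
      ((comap_measurable _).mono (le_iSup₂ (f := fun z _ => m z) _ hr) le_rfl)
  rw [IndepFun_iff_Indep]
  refine indep_of_indep_of_le_right (indep_of_indep_of_le_left key ?_) ?_
  · exact (hmeas (by simp) (by simp)).comap_le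
  · exact (measurable_suffixSumSup (mΩ := ⨆ z ∈ {z : ℕ ⊕ ℕ | Sum.elim id id z < t}, m z)
      fun i hi => hmeas (by simpa using hi) (by simpa using hi)).comap_le

lemma measure_lt_add_le_of_indepFun [IsFiniteMeasure μ] {ξ G : Ω → ℝ} (hξ : Measurable ξ)
    (hG : Measurable G)
    (hξG : IndepFun ξ G μ) {θ : ℝ} (hξ_int : Integrable (fun ω => exp (θ * ξ ω)) μ)
    (hG_tail : ∀ y, μ {ω | y < G ω} ≤ ENNReal.ofReal (exp (-θ * y))) (x : ℝ) :
    μ {ω | x < ξ ω + G ω} ≤ ENNReal.ofReal (exp (-θ * x) * mgf ξ μ θ) := by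
  have hE : MeasurableSet {p : ℝ × ℝ | x < p.1 + p.2} :=
    measurableSet_lt measurable_const (measurable_fst.add measurable_snd)
  have hexp : Measurable fun y : ℝ => ENNReal.ofReal (exp (-θ * (x - y))) := by fun_prop
  calc μ {ω | x < ξ ω + G ω}
        = (μ.map ξ).prod (μ.map G) {p : ℝ × ℝ | x < p.1 + p.2} := by
        rw [← hξG.map_prod_eq_prod_map_map hξ.aemeasurable hG.aemeasurable,
          Measure.map_apply (hξ.prodMk hG) hE]
        rfl
    _ = ∫⁻ y, μ {ω | x - y < G ω} ∂(μ.map ξ) := by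
        rw [Measure.prod_apply hE]
        refine lintegral_congr fun y => ?_
        have hslice : Prod.mk y ⁻¹' {p : ℝ × ℝ | x < p.1 + p.2} = Set.Ioi (x - y) := by
          ext g
          simp [sub_lt_iff_lt_add']
        rw [hslice, Measure.map_apply hG measurableSet_Ioi]
        rfl
    _ ≤ ∫⁻ y, ENNReal.ofReal (exp (-θ * (x - y))) ∂(μ.map ξ) :=
        lintegral_mono fun y => hG_tail (x - y)
    _ = ∫⁻ ω, ENNReal.ofReal (exp (-θ * x) * exp (θ * ξ ω)) ∂μ := by
        rw [lintegral_map hexp hξ]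
        congr with ω
        rw [← exp_add]
        ring_nf
    _ = ENNReal.ofReal (exp (-θ * x) * mgf ξ μ θ) := by
        rw [mgf, ← integral_const_mul, ofReal_integral_eq_lintegral_ofReal (hξ_int.const_mul _)
          (ae_of_all _ fun ω => by positivity)]

theorem measure_lt_suffixSumSup_le [IsProbabilityMeasure μ] {X : ℕ → Ω → ℝ}
    (hX : ∀ i, Measurable (X i))
    (hX_indep : ∀ t, IndepFun (X t) (suffixSumSup X t) μ) {θ : ℝ} (hθ : 0 ≤ θ)
    (hX_int : ∀ t, Integrable (fun ω => exp (θ * X t ω)) μ)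
    (hX_mgf : ∀ t, mgf (X t) μ θ ≤ 1)
    (t : ℕ) (x : ℝ) :
    μ {ω | x < suffixSumSup X t ω} ≤ ENNReal.ofReal (exp (-θ * x)) := by
  have h_neg : ∀ {x : ℝ}, x < 0 → ∀ E : Set Ω, μ E ≤ ENNReal.ofReal (exp (-θ * x)) :=
    fun hx E => prob_le_one.trans (ENNReal.one_le_ofReal.mpr (one_le_exp (by nlinarith)))
  induction t generalizing x with
  | zero =>
    rcases lt_or_ge x 0 with hx | hx
    · exact h_neg hx _
    · simp [hx.not_gt]
  | succ t ih =>
    rcases lt_or_ge x 0 with hx | hx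
    · exact h_neg hx _
    have hset :
        {ω | x < suffixSumSup X (t + 1) ω} = {ω | x < X t ω + suffixSumSup X t ω} := by
      ext ω
      simp [suffixSumSup_succ, hx.not_gt]
    calc μ {ω | x < suffixSumSup X (t + 1) ω}
        ≤ ENNReal.ofReal (exp (-θ * x) * mgf (X t) μ θ) :=
          hset ▸ measure_lt_add_le_of_indepFun (hX t)
            (measurable_suffixSumSup fun i _ => hX i) (hX_indep t) (hX_int t) ih x
      _ ≤ ENNReal.ofReal (exp (-θ * x)) :=
          ENNReal.ofReal_le_ofReal (mul_le_of_le_one_right (exp_pos _).le (hX_mgf t))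

end ProbabilityTheory

theorem single_node_backlog_bound_general
    {Ω : Type*} [MeasurableSpace Ω] (μ : Measure Ω) [IsProbabilityMeasure μ]
    (a s : ℕ → Ω → ℝ)
    (ha_meas : ∀ i, Measurable (a i)) (hs_meas : ∀ i, Measurable (s i))
    (h_indep : iIndepFun (Sum.elim a s) μ)
    (ha_ident : ∀ i, IdentDistrib (a i) (a 0) μ μ)
    (hs_ident : ∀ i, IdentDistrib (s i) (s 0) μ μ)
    (θstar : ℝ) (hθstar : 0 < θstar)
    (ha_int : Integrable (fun ω => Real.exp (θstar * a 0 ω)) μ)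
    (hs_int : Integrable (fun ω => Real.exp (-θstar * s 0 ω)) μ)
    (h_stab : (1 / θstar) * Real.log (∫ ω, Real.exp (θstar * a 0 ω) ∂μ)
          ≤ -(1 / θstar) * Real.log (∫ ω, Real.exp (-θstar * s 0 ω) ∂μ))
    (D : ℕ → Ω → ℝ)
    (hD_lb : ∀ ω t, (Finset.range (t + 1)).inf' Finset.nonempty_range_add_one
        (fun u => (∑ i ∈ Finset.range u, a i ω) + ∑ i ∈ Finset.Ico u t, s i ω) ≤ D t ω)
    (t : ℕ) (x : ℝ) :
    μ {ω | x < (∑ i ∈ Finset.range t, a i ω) - D t ω}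
      ≤ ENNReal.ofReal (Real.exp (-θstar * x)) := by
  have h_indep_t : ∀ t, IndepFun (a t) (s t) μ := fun t =>
    h_indep.indepFun (Sum.inl_ne_inr (a := t) (b := t))
  have ha_int_t : ∀ t, Integrable (fun ω => exp (θstar * a t ω)) μ := fun t =>
    ((ha_ident t).integrable_exp_mul_iff θstar).mpr ha_int
  have hs_int_t : ∀ t, Integrable (fun ω => exp (-θstar * s t ω)) μ := fun t =>
    ((hs_ident t).integrable_exp_mul_iff (-θstar)).mpr hs_int
  have h_mgf : ∀ t, mgf ((a - s) t) μ θstar ≤ 1 := fun t =>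
    mgf_sub_le_one (h_indep_t t) hθstar (ha_int_t t) (hs_int_t t)
      (by rwa [(ha_ident t).mgf_eq, (hs_ident t).mgf_eq])
  calc μ {ω | x < (∑ i ∈ Finset.range t, a i ω) - D t ω}
      ≤ μ {ω | x < suffixSumSup (a - s) t ω} := measure_mono fun ω hω =>
        hω.trans_le (sum_range_sub_le_suffixSumSup a s t ω (hD_lb ω t))
    _ ≤ ENNReal.ofReal (Real.exp (-θstar * x)) :=
        measure_lt_suffixSumSup_le (fun i => (ha_meas i).sub (hs_meas i))
          (indepFun_sub_suffixSumSup ha_meas hs_meas h_indep) hθstar.le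
          (fun t => (h_indep_t t).integrable_exp_mul_sub (ha_int_t t) (hs_int_t t)) h_mgf t x

/-- Single-node backlog bound (Theorem 1, H = 1): for a node with i.i.d. nonnegative
arrival increments `a` (cumulative `A u t = Σ_{u ≤ i < t} a i`), i.i.d. nonnegative service
increments `s` (cumulative `S u t`), the two families mutually independent, a departure
process `D` with `A ⊗ S (t) ≤ D t ≤ A t` samplewise, and `θ* > 0` with
`α(θ*) ≤ β(θ*)`, the backlog `B t = A t − D t` satisfies
`P{ B t > x } ≤ exp (−θ* x)` for all `t` and `x ≥ 0`. -/
theorem single_node_backlog_bound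
    {Ω : Type*} [MeasurableSpace Ω] (μ : Measure Ω) [IsProbabilityMeasure μ]
    (a s : ℕ → Ω → ℝ)
    (ha_meas : ∀ i, Measurable (a i)) (hs_meas : ∀ i, Measurable (s i))
    (ha_nonneg : ∀ i ω, 0 ≤ a i ω) (hs_nonneg : ∀ i ω, 0 ≤ s i ω)
    (h_indep : iIndepFun (Sum.elim a s) μ)
    (ha_ident : ∀ i, IdentDistrib (a i) (a 0) μ μ)
    (hs_ident : ∀ i, IdentDistrib (s i) (s 0) μ μ)
    (θstar : ℝ) (hθstar : 0 < θstar)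
    (ha_int : Integrable (fun ω => Real.exp (θstar * a 0 ω)) μ)
    (hs_int : Integrable (fun ω => Real.exp (-θstar * s 0 ω)) μ)
    (h_stab : (1 / θstar) * Real.log (∫ ω, Real.exp (θstar * a 0 ω) ∂μ)
          ≤ -(1 / θstar) * Real.log (∫ ω, Real.exp (-θstar * s 0 ω) ∂μ))
    (D : ℕ → Ω → ℝ) (hD_meas : ∀ t, Measurable (D t))
    (hD_lb : ∀ ω t, (Finset.range (t + 1)).inf' Finset.nonempty_range_add_one
        (fun u => (∑ i ∈ Finset.range u, a i ω) + ∑ i ∈ Finset.Ico u t, s i ω) ≤ D t ω)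
    (hD_ub : ∀ ω t, D t ω ≤ ∑ i ∈ Finset.range t, a i ω)
    (t : ℕ) (x : ℝ) (hx : 0 ≤ x) :
    μ {ω | x < (∑ i ∈ Finset.range t, a i ω) - D t ω}
      ≤ ENNReal.ofReal (Real.exp (-θstar * x)) :=
  single_node_backlog_bound_general μ a s ha_meas hs_meas h_indep ha_ident hs_ident θstar hθstar
    ha_int hs_int h_stab D hD_lb t x
end

section
/- (Single-node delay bound, Theorem 1 with H = 1, equation (12).) Let (a_i)_{i≥1} and (s_i)_{i≥1} be two mutually independent families of i.i.d. nonnegative random variables, let A(u,t) = Σ_{i=u+1}^{t} a_i and S(u,t) = Σ_{i=u+1}^{t} s_i (with A(t) = A(0,t)), and let α(θ) = (1/θ) log E[e^{θ A(0,1)}] and β(θ) = −(1/θ) log E[e^{−θ S(0,1)}]. Let D be a random process satisfying, for every sample path, inf_{0 ≤ u ≤ t} { A(u) + S(u,t) } ≤ D(t) ≤ A(t) for all t. If θ* > 0 satisfies E[e^{θ* a_1}] < ∞, E[e^{−θ* s_1}] < ∞ and α(θ*) ≤ β(θ*), then for every t ∈ ℕ and every integer d with 0 ≤ d ≤ t,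 P{ A(t − d) > D(t) } ≤ e^{−θ* α(θ*) d}; equivalently, the virtual delay W(t) = inf{ d ≥ 0 : A(t − d) ≤ D(t) } satisfies P{ W(t) > d } ≤ e^{−θ* α(θ*) d}. -/
/-!
Write `n = t - d`. If `D t < A n`, some `u < n` has `A u + S(u, t) < A n`, i.e. the backward
random walk `∑_{i ∈ [u, n)} (a i - s i)` exceeds the independent level `Y = S(n, t)`. When
`E[e^{θ (a - s)}] ≤ 1`, which is what `α(θ) ≤ β(θ)` says, the probability that a walk ever
exceeds a level `Y` independent of it is at most `E[e^{-θ Y}]` (Kingman's bound, proved by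
conditioning on the first step), and `E[e^{-θ S(n, t)}] = e^{-θ β(θ) d} ≤ e^{-θ α(θ) d}`.
-/

open MeasureTheory ProbabilityTheory

open scoped ENNReal

section LIntegral

variable {Ω : Type*} {mΩ : MeasurableSpace Ω} {μ : Measure Ω}

theorem setLIntegral_mul_eq_of_indep {M₁ M₂ : MeasurableSpace Ω} (h₁ : M₁ ≤ mΩ) (h₂ : M₂ ≤ mΩ)
    (hind : Indep M₁ M₂ μ) {C : Set Ω} (hC : MeasurableSet[M₁] C) {f g : Ω → ℝ≥0∞}
    (hf : Measurable[M₁] f) (hg : Measurable[M₂] g) :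
    ∫⁻ ω in C, f ω * g ω ∂μ = (∫⁻ ω in C, f ω ∂μ) * ∫⁻ ω, g ω ∂μ := by
  simp_rw [← lintegral_indicator (h₁ C hC), Set.indicator_mul_left]
  exact lintegral_mul_eq_lintegral_mul_lintegral_of_independent_measurableSpace h₁ h₂ hind
    (hf.indicator hC) hg

theorem measure_le_setLIntegral_exp_neg_mul {θ : ℝ} (hθ : 0 ≤ θ) {Y : Ω → ℝ} {S : Set Ω}
    (hS : MeasurableSet S) (hYS : ∀ ω ∈ S, Y ω < 0) :
    μ S ≤ ∫⁻ ω in S, ENNReal.ofReal (Real.exp (-θ * Y ω)) ∂μ := by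
  rw [← setLIntegral_one]
  refine setLIntegral_mono' hS fun ω hω => ENNReal.one_le_ofReal.2 (Real.one_le_exp ?_)
  nlinarith [hYS ω hω]

end LIntegral

theorem exists_sub_lt_sum_range_succ_of_nonneg {f : ℕ → ℝ} {y : ℝ} {n : ℕ} (hy : 0 ≤ y)
    (h : ∃ k ≤ n + 1, y < ∑ j ∈ Finset.range k, f j) :
    ∃ k ≤ n, y - f 0 < ∑ j ∈ Finset.range k, f (j + 1) := by
  obtain ⟨_ | k, hk, hlt⟩ := h
  · simp only [Finset.range_zero, Finset.sum_empty] at hlt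
    linarith
  · refine ⟨k, by omega, ?_⟩
    rw [Finset.sum_range_succ'] at hlt
    linarith

section Kingman

variable {Ω : Type*} {mΩ : MeasurableSpace Ω} {μ : Measure Ω} (ℱ : Filtration ℕ mΩ)
  {ξ : ℕ → Ω → ℝ} {θ : ℝ} {N : ℕ}

/-- The walk is started at time `m`; the set `B` is what lets the induction condition on `ℱ m`:
off `{Y < 0}`, the first step turns the level `Y` into the `ℱ (m + 1)`-measurable `Y - ξ m`, and
the independent factor `exp (θ ξ m)` has mean at most one. -/
theorem measure_inter_exists_lt_sum_le (hθ : 0 ≤ θ)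
    (hξ_meas : ∀ k < N, Measurable[ℱ (k + 1)] (ξ k))
    (hξ_indep : ∀ k < N, Indep (ℱ k) (MeasurableSpace.comap (ξ k) inferInstance) μ)
    (hξ_mgf : ∀ k < N, ∫⁻ ω, ENNReal.ofReal (Real.exp (θ * ξ k ω)) ∂μ ≤ 1) :
    ∀ n m, m + n ≤ N → ∀ Y : Ω → ℝ, Measurable[ℱ m] Y → ∀ B, MeasurableSet[ℱ m] B →
      μ (B ∩ {ω | ∃ k ≤ n, Y ω < ∑ j ∈ Finset.range k, ξ (m + j) ω})
        ≤ ∫⁻ ω in B, ENNReal.ofReal (Real.exp (-θ * Y ω)) ∂μ := by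
  intro n
  induction n with
  | zero =>
    intro m _ Y hY B hB
    have hsub : B ∩ {ω | ∃ k ≤ 0, Y ω < ∑ j ∈ Finset.range k, ξ (m + j) ω}
        ⊆ B ∩ {ω | Y ω < 0} := by
      rintro ω ⟨hωB, k, hk, hω⟩
      obtain rfl : k = 0 := by omega
      exact ⟨hωB, by simpa using hω⟩
    calc _ ≤ μ (B ∩ {ω | Y ω < 0}) := measure_mono hsub
      _ ≤ ∫⁻ ω in B ∩ {ω | Y ω < 0}, ENNReal.ofReal (Real.exp (-θ * Y ω)) ∂μ :=
          measure_le_setLIntegral_exp_neg_mul hθ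
            (ℱ.le m _ (hB.inter (measurableSet_lt hY measurable_const))) fun ω hω => hω.2
      _ ≤ _ := lintegral_mono_set Set.inter_subset_left
  | succ n ih =>
    intro m hmn Y hY B hB
    have hm : m < N := by omega
    set L := {ω | Y ω < 0}
    have hL : MeasurableSet[ℱ m] L := measurableSet_lt hY measurable_const
    have hBL : MeasurableSet[ℱ m] (B \ L) := hB.diff hL
    have hsub : B ∩ {ω | ∃ k ≤ n + 1, Y ω < ∑ j ∈ Finset.range k, ξ (m + j) ω}
        ⊆ (B ∩ L) ∪ ((B \ L) ∩
          {ω | ∃ k ≤ n, Y ω - ξ m ω < ∑ j ∈ Finset.range k, ξ (m + 1 + j) ω}) := by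
      rintro ω ⟨hωB, hω⟩
      by_cases hωL : ω ∈ L
      · exact Or.inl ⟨hωB, hωL⟩
      · refine Or.inr ⟨⟨hωB, hωL⟩, ?_⟩
        simpa only [Set.mem_ofPred_eq, add_zero, ← add_assoc, add_right_comm m _ 1] using
          exists_sub_lt_sum_range_succ_of_nonneg (le_of_not_gt hωL) hω
    have hexp : ∀ ω, ENNReal.ofReal (Real.exp (-θ * (Y ω - ξ m ω)))
        = ENNReal.ofReal (Real.exp (-θ * Y ω)) * ENNReal.ofReal (Real.exp (θ * ξ m ω)) := by
      intro ω
      rw [← ENNReal.ofReal_mul (Real.exp_pos _).le, ← Real.exp_add]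
      ring_nf
    calc _ ≤ μ (B ∩ L) + μ ((B \ L) ∩
          {ω | ∃ k ≤ n, Y ω - ξ m ω < ∑ j ∈ Finset.range k, ξ (m + 1 + j) ω}) :=
          (measure_mono hsub).trans (measure_union_le _ _)
      _ ≤ ∫⁻ ω in B ∩ L, ENNReal.ofReal (Real.exp (-θ * Y ω)) ∂μ
          + ∫⁻ ω in B \ L, ENNReal.ofReal (Real.exp (-θ * (Y ω - ξ m ω))) ∂μ := by
          gcongr
          · exact measure_le_setLIntegral_exp_neg_mul hθ (ℱ.le m _ (hB.inter hL))
              fun ω hω => hω.2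
          · exact ih (m + 1) (by omega) _ ((hY.mono (ℱ.mono m.le_succ) le_rfl).sub
              (hξ_meas m hm)) _ (ℱ.mono m.le_succ _ hBL)
      _ ≤ ∫⁻ ω in B ∩ L, ENNReal.ofReal (Real.exp (-θ * Y ω)) ∂μ
          + ∫⁻ ω in B \ L, ENNReal.ofReal (Real.exp (-θ * Y ω)) ∂μ := by
          simp_rw [hexp]
          rw [setLIntegral_mul_eq_of_indep (ℱ.le m) (measurable_iff_comap_le.1
              ((hξ_meas m hm).mono (ℱ.le _) le_rfl)) (hξ_indep m hm) hBL
              (hY.const_mul (-θ)).exp.ennreal_ofReal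
              ((comap_measurable (ξ m)).const_mul θ).exp.ennreal_ofReal]
          gcongr
          exact mul_le_of_le_one_right' (hξ_mgf m hm)
      _ = _ := lintegral_inter_add_sdiff _ _ (ℱ.le m _ hL)

theorem measure_exists_lt_sum_le (hθ : 0 ≤ θ) {Y : Ω → ℝ} (hY : Measurable[ℱ 0] Y)
    (hξ_meas : ∀ k < N, Measurable[ℱ (k + 1)] (ξ k))
    (hξ_indep : ∀ k < N, Indep (ℱ k) (MeasurableSpace.comap (ξ k) inferInstance) μ)
    (hξ_mgf : ∀ k < N, ∫⁻ ω, ENNReal.ofReal (Real.exp (θ * ξ k ω)) ∂μ ≤ 1) :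
    μ {ω | ∃ k ≤ N, Y ω < ∑ j ∈ Finset.range k, ξ j ω}
      ≤ ∫⁻ ω, ENNReal.ofReal (Real.exp (-θ * Y ω)) ∂μ := by
  simpa using measure_inter_exists_lt_sum_le ℱ hθ hξ_meas hξ_indep hξ_mgf N 0 (by omega) Y hY
    Set.univ MeasurableSet.univ

end Kingman

section Moments

variable {Ω : Type*} {mΩ : MeasurableSpace Ω} {μ : Measure Ω} {θ : ℝ}

theorem integrable_exp_neg_mul_of_nonneg [IsFiniteMeasure μ] {X : Ω → ℝ} (hX : Measurable X)
    (hX_nonneg : ∀ ω, 0 ≤ X ω) (hθ : 0 ≤ θ) :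
    Integrable (fun ω => Real.exp (-θ * X ω)) μ := by
  simpa only [Pi.neg_apply, mul_neg, neg_mul] using
    integrable_exp_mul_of_le (μ := μ) θ 0 hθ hX.neg.aemeasurable
      (ae_of_all _ fun ω => neg_nonpos.2 (hX_nonneg ω))

theorem lintegral_ofReal_exp_mul {X : Ω → ℝ} (h : Integrable (fun ω => Real.exp (θ * X ω)) μ) :
    ∫⁻ ω, ENNReal.ofReal (Real.exp (θ * X ω)) ∂μ = ENNReal.ofReal (mgf X μ θ) :=
  (ofReal_integral_eq_lintegral_ofReal h (ae_of_all _ fun _ => (Real.exp_pos _).le)).symm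

theorem lintegral_ofReal_exp_mul_sub {X Z : Ω → ℝ} (hXZ : IndepFun X Z μ) (hX : Measurable X)
    (hZ : Measurable Z) (hX_int : Integrable (fun ω => Real.exp (θ * X ω)) μ)
    (hZ_int : Integrable (fun ω => Real.exp (-θ * Z ω)) μ) :
    ∫⁻ ω, ENNReal.ofReal (Real.exp (θ * (X ω - Z ω))) ∂μ
      = ENNReal.ofReal (mgf X μ θ * mgf Z μ (-θ)) := by
  have hsplit : ∀ ω, ENNReal.ofReal (Real.exp (θ * (X ω - Z ω)))
      = ENNReal.ofReal (Real.exp (θ * X ω)) * ENNReal.ofReal (Real.exp (-θ * Z ω)) := by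
    intro ω
    rw [← ENNReal.ofReal_mul (Real.exp_pos _).le, ← Real.exp_add]
    ring_nf
  simp_rw [hsplit]
  rw [lintegral_mul_eq_lintegral_mul_lintegral_of_indepFun''
      (hX.const_mul θ).exp.ennreal_ofReal.aemeasurable
      (hZ.const_mul (-θ)).exp.ennreal_ofReal.aemeasurable
      ((hXZ.exp_mul θ (-θ)).comp ENNReal.measurable_ofReal ENNReal.measurable_ofReal),
    lintegral_ofReal_exp_mul hX_int, lintegral_ofReal_exp_mul hZ_int,
    ENNReal.ofReal_mul mgf_nonneg]

theorem lintegral_ofReal_exp_mul_sub_le_one {X Z X₀ Z₀ : Ω → ℝ} (hXZ : IndepFun X Z μ)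
    (hX : Measurable X) (hZ : Measurable Z) (hX_ident : IdentDistrib X X₀ μ μ)
    (hZ_ident : IdentDistrib Z Z₀ μ μ) (hX₀_int : Integrable (fun ω => Real.exp (θ * X₀ ω)) μ)
    (hZ_int : Integrable (fun ω => Real.exp (-θ * Z ω)) μ)
    (h : mgf X₀ μ θ * mgf Z₀ μ (-θ) ≤ 1) :
    ∫⁻ ω, ENNReal.ofReal (Real.exp (θ * (X ω - Z ω))) ∂μ ≤ 1 := by
  rw [lintegral_ofReal_exp_mul_sub hXZ hX hZ
    ((hX_ident.comp (measurable_const_mul θ).exp).integrable_iff.2 hX₀_int) hZ_int,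
    mgf_congr_of_identDistrib _ _ hX_ident, mgf_congr_of_identDistrib _ _ hZ_ident]
  exact ENNReal.ofReal_le_one.2 h

theorem mgf_sum_eq_pow {X : ℕ → Ω → ℝ} (h_indep : iIndepFun X μ) (hX : ∀ i, Measurable (X i))
    (hX_ident : ∀ i, IdentDistrib (X i) (X 0) μ μ) (S : Finset ℕ) :
    mgf (fun ω => ∑ i ∈ S, X i ω) μ θ = mgf (X 0) μ θ ^ S.card := by
  rw [← Finset.sum_fn, h_indep.mgf_sum hX, ← Finset.prod_const]
  exact Finset.prod_congr rfl fun i _ => mgf_congr_of_identDistrib _ _ (hX_ident i) θ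

theorem lintegral_ofReal_exp_neg_mul_sum [IsFiniteMeasure μ] {X : ℕ → Ω → ℝ}
    (h_indep : iIndepFun X μ) (hX : ∀ i, Measurable (X i)) (hX_nonneg : ∀ i ω, 0 ≤ X i ω)
    (hX_ident : ∀ i, IdentDistrib (X i) (X 0) μ μ) (hθ : 0 ≤ θ) (S : Finset ℕ) :
    ∫⁻ ω, ENNReal.ofReal (Real.exp (-θ * ∑ i ∈ S, X i ω)) ∂μ
      = ENNReal.ofReal (mgf (X 0) μ (-θ) ^ S.card) := by
  rw [lintegral_ofReal_exp_mul (integrable_exp_neg_mul_of_nonneg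
      (Finset.measurable_sum _ fun i _ => hX i)
      (fun ω => Finset.sum_nonneg fun i _ => hX_nonneg i ω) hθ),
    mgf_sum_eq_pow h_indep hX hX_ident]

theorem mul_le_one_of_inv_mul_log_le_s14 {θ M M' : ℝ} (hθ : 0 < θ) (hM : 0 < M) (hM' : 0 < M')
    (h : 1 / θ * Real.log M ≤ -(1 / θ) * Real.log M') : M * M' ≤ 1 := by
  rw [← Real.log_nonpos_iff (mul_pos hM hM').le, Real.log_mul hM.ne' hM'.ne']
  have := mul_le_mul_of_nonneg_left h hθ.le
  field_simp at this
  linarith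

theorem le_exp_neg_mul_of_le_neg_inv_mul_log {θ α M : ℝ} (hθ : 0 < θ) (hM : 0 < M)
    (h : α ≤ -(1 / θ) * Real.log M) : M ≤ Real.exp (-(θ * α)) := by
  rw [← Real.exp_log hM, Real.exp_le_exp]
  have := mul_le_mul_of_nonneg_left h hθ.le
  field_simp at this
  linarith

end Moments

section GeneratedFiltration

variable {Ω ι β : Type*} {mΩ : MeasurableSpace Ω} [mβ : MeasurableSpace β] {μ : Measure Ω}
  {X : ι → Ω → β}

theorem measurable_biSup_comap {S : Set ι} {i : ι} (hi : i ∈ S) :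
    Measurable[⨆ j ∈ S, mβ.comap (X j)] (X i) :=
  Measurable.of_comap_le (le_biSup (fun j => mβ.comap (X j)) hi)

/-- Time runs backwards from `n`; `τ i` is the time stamp of `X i`. -/
def reverseTimeFiltration (X : ι → Ω → β) (hX : ∀ i, Measurable (X i)) (τ : ι → ℕ) (n : ℕ) :
    Filtration ℕ mΩ where
  seq k := ⨆ i ∈ {i | n - k ≤ τ i}, mβ.comap (X i)
  mono' k l hkl := biSup_mono fun i (hi : n - k ≤ τ i) => show n - l ≤ τ i by omega
  le' _ := iSup₂_le fun i _ => (hX i).comap_le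

variable (hX : ∀ i, Measurable (X i)) {τ : ι → ℕ} {n k : ℕ}

theorem measurable_reverseTimeFiltration {i : ι} (hi : n - k ≤ τ i) :
    Measurable[reverseTimeFiltration X hX τ n k] (X i) :=
  measurable_biSup_comap hi

theorem indep_reverseTimeFiltration (h_indep : iIndepFun X μ) {m : ℕ} (hm : m < n - k) :
    Indep (reverseTimeFiltration X hX τ n k) (⨆ i ∈ {i | τ i = m}, mβ.comap (X i)) μ :=
  indep_iSup_of_disjoint (fun i => (hX i).comap_le) ((iIndepFun_iff_iIndep _ _ _).1 h_indep)
    (Set.disjoint_left.2 fun i (h₁ : n - k ≤ τ i) (h₂ : τ i = m) => by omega)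

end GeneratedFiltration

section ArrivalService

variable {Ω : Type*} {mΩ : MeasurableSpace Ω} {μ : Measure Ω} {a s : ℕ → Ω → ℝ}

theorem measurable_sub_of_mem {S : Set (ℕ ⊕ ℕ)} {m : ℕ} (ha : Sum.inl m ∈ S)
    (hs : Sum.inr m ∈ S) :
    Measurable[⨆ i ∈ S, MeasurableSpace.comap (Sum.elim a s i) inferInstance]
      fun ω => a m ω - s m ω :=
  (measurable_biSup_comap (X := Sum.elim a s) ha).sub
    (measurable_biSup_comap (X := Sum.elim a s) hs)

theorem measure_exists_lt_backward_sum_le (ha : ∀ i, Measurable (a i))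
    (hs : ∀ i, Measurable (s i)) (h_indep : iIndepFun (Sum.elim a s) μ) {θ : ℝ} (hθ : 0 ≤ θ)
    {n : ℕ} (t : ℕ)
    (h_mgf : ∀ m < n, ∫⁻ ω, ENNReal.ofReal (Real.exp (θ * (a m ω - s m ω))) ∂μ ≤ 1) :
    μ {ω | ∃ k ≤ n, ∑ i ∈ Finset.Ico n t, s i ω
        < ∑ j ∈ Finset.range k, (a (n - 1 - j) ω - s (n - 1 - j) ω)}
      ≤ ∫⁻ ω, ENNReal.ofReal (Real.exp (-θ * ∑ i ∈ Finset.Ico n t, s i ω)) ∂μ := by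
  have hX : ∀ i, Measurable (Sum.elim a s i) := Sum.forall.2 ⟨ha, hs⟩
  refine measure_exists_lt_sum_le (reverseTimeFiltration _ hX (Sum.elim id id) n) hθ
    (Finset.measurable_sum _ fun i hi =>
      measurable_reverseTimeFiltration (i := Sum.inr i) _ (Finset.mem_Ico.1 hi).1)
    (fun k hk => ?_) (fun k hk => ?_) (fun k hk => h_mgf _ (by omega))
  · exact measurable_sub_of_mem (show n - (k + 1) ≤ n - 1 - k by omega)
      (show n - (k + 1) ≤ n - 1 - k by omega)
  · exact indep_of_indep_of_le_right
      (indep_reverseTimeFiltration _ h_indep (by omega : n - 1 - k < n - k))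
      (measurable_sub_of_mem (S := {i | Sum.elim id id i = n - 1 - k}) rfl rfl).comap_le

end ArrivalService

theorem sum_range_sub_one_sub_eq_sum_Ico {M : Type*} [AddCommMonoid M] (f : ℕ → M) {u n : ℕ}
    (hun : u < n) : ∑ j ∈ Finset.range (n - u), f (n - 1 - j) = ∑ i ∈ Finset.Ico u n, f i := by
  have h := Finset.sum_Ico_reflect f 0 (m := n - u) (n := n - 1) (by omega)
  rwa [show n - 1 + 1 - (n - u) = u by omega, show n - 1 + 1 - 0 = n by omega,
    ← Finset.range_eq_Ico] at h

theorem exists_lt_sum_range_of_inf'_lt {a s : ℕ → ℝ} (ha : ∀ i, 0 ≤ a i) (hs : ∀ i, 0 ≤ s i)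
    {n t : ℕ} (hnt : n ≤ t)
    (h : (Finset.range (t + 1)).inf' Finset.nonempty_range_add_one
      (fun u => (∑ i ∈ Finset.range u, a i) + ∑ i ∈ Finset.Ico u t, s i)
        < ∑ i ∈ Finset.range n, a i) :
    ∃ k ≤ n, ∑ i ∈ Finset.Ico n t, s i < ∑ j ∈ Finset.range k, (a (n - 1 - j) - s (n - 1 - j)) := by
  obtain ⟨u, -, hu⟩ := (Finset.inf'_lt_iff _).1 h
  have hun : u < n := by
    by_contra! hnu
    have := Finset.sum_le_sum_of_subset_of_nonneg (Finset.range_subset_range.2 hnu)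
      fun i _ _ => ha i
    linarith [Finset.sum_nonneg fun i (_ : i ∈ Finset.Ico u t) => hs i]
  refine ⟨n - u, by omega, ?_⟩
  rw [sum_range_sub_one_sub_eq_sum_Ico (fun i => a i - s i) hun, Finset.sum_sub_distrib]
  rw [← Finset.sum_range_add_sum_Ico a hun.le, ← Finset.sum_Ico_consecutive s hun.le hnt] at hu
  linarith

theorem single_node_delay_bound_general
    {Ω : Type*} [MeasurableSpace Ω] (μ : Measure Ω) [IsProbabilityMeasure μ]
    (a s : ℕ → Ω → ℝ)
    (ha_meas : ∀ i, Measurable (a i)) (hs_meas : ∀ i, Measurable (s i))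
    (ha_nonneg : ∀ i ω, 0 ≤ a i ω) (hs_nonneg : ∀ i ω, 0 ≤ s i ω)
    (h_indep : iIndepFun (Sum.elim a s) μ)
    (ha_ident : ∀ i, IdentDistrib (a i) (a 0) μ μ)
    (hs_ident : ∀ i, IdentDistrib (s i) (s 0) μ μ)
    (θstar : ℝ) (hθstar : 0 < θstar)
    (ha_int : Integrable (fun ω => Real.exp (θstar * a 0 ω)) μ)
    (α : ℝ) (hα : α = (1 / θstar) * Real.log (∫ ω, Real.exp (θstar * a 0 ω) ∂μ))
    (h_stab : α ≤ -(1 / θstar) * Real.log (∫ ω, Real.exp (-θstar * s 0 ω) ∂μ))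
    (D : ℕ → Ω → ℝ)
    (hD_lb : ∀ ω t, (Finset.range (t + 1)).inf' ⟨0, Finset.mem_range.mpr (Nat.succ_pos t)⟩
        (fun u => (∑ i ∈ Finset.range u, a i ω) + ∑ i ∈ Finset.Ico u t, s i ω) ≤ D t ω)
    (t d : ℕ) (hd : d ≤ t) :
    μ {ω | D t ω < ∑ i ∈ Finset.range (t - d), a i ω}
      ≤ ENNReal.ofReal (Real.exp (-θstar * α * d)) := by
  set n := t - d
  have hs_int : ∀ i, Integrable (fun ω => Real.exp (-θstar * s i ω)) μ := fun i =>
    integrable_exp_neg_mul_of_nonneg (hs_meas i) (hs_nonneg i) hθstar.le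
  have hMs := le_exp_neg_mul_of_le_neg_inv_mul_log hθstar (mgf_pos (hs_int 0)) h_stab
  have hMaMs := mul_le_one_of_inv_mul_log_le_s14 hθstar (mgf_pos ha_int) (mgf_pos (hs_int 0))
    (hα ▸ h_stab)
  have has_indep : ∀ m, IndepFun (a m) (s m) μ := fun m => h_indep.indepFun Sum.inl_ne_inr
  have hs_indep : iIndepFun s μ := h_indep.precomp (g := Sum.inr) Sum.inr_injective
  calc μ {ω | D t ω < ∑ i ∈ Finset.range n, a i ω}
      ≤ μ {ω | ∃ k ≤ n, ∑ i ∈ Finset.Ico n t, s i ω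
          < ∑ j ∈ Finset.range k, (a (n - 1 - j) ω - s (n - 1 - j) ω)} :=
        measure_mono fun ω hω => exists_lt_sum_range_of_inf'_lt (ha_nonneg · ω) (hs_nonneg · ω)
          (Nat.sub_le t d) ((hD_lb ω t).trans_lt hω)
    _ ≤ ∫⁻ ω, ENNReal.ofReal (Real.exp (-θstar * ∑ i ∈ Finset.Ico n t, s i ω)) ∂μ :=
        measure_exists_lt_backward_sum_le ha_meas hs_meas h_indep hθstar.le t fun m _ =>
          lintegral_ofReal_exp_mul_sub_le_one (has_indep m) (ha_meas m) (hs_meas m) (ha_ident m)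
            (hs_ident m) ha_int (hs_int m) hMaMs
    _ = ENNReal.ofReal (mgf (s 0) μ (-θstar) ^ d) := by
        rw [lintegral_ofReal_exp_neg_mul_sum hs_indep hs_meas hs_nonneg hs_ident hθstar.le,
          Nat.card_Ico, show t - n = d by omega]
    _ ≤ ENNReal.ofReal (Real.exp (-θstar * α * d)) := by
        gcongr
        calc _ ≤ Real.exp (-(θstar * α)) ^ d := pow_le_pow_left₀ mgf_nonneg hMs d
          _ = Real.exp (-θstar * α * d) := by rw [← Real.exp_nat_mul]; ring_nf

/-- Single-node delay bound (Theorem 1, H = 1, equation (12)): in the setting of a single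
node with i.i.d. nonnegative arrival increments `a`, i.i.d. nonnegative service increments
`s` (mutually independent families), a departure process `D` with
`A ⊗ S (t) ≤ D t ≤ A t` samplewise, and `θ* > 0` with `α(θ*) ≤ β(θ*)`, the virtual delay
satisfies `P{ W t > d } = P{ A (t − d) > D t } ≤ exp (−θ* α(θ*) d)` for `0 ≤ d ≤ t`. -/
theorem single_node_delay_bound
    {Ω : Type*} [MeasurableSpace Ω] (μ : Measure Ω) [IsProbabilityMeasure μ]
    (a s : ℕ → Ω → ℝ)
    (ha_meas : ∀ i, Measurable (a i)) (hs_meas : ∀ i, Measurable (s i))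
    (ha_nonneg : ∀ i ω, 0 ≤ a i ω) (hs_nonneg : ∀ i ω, 0 ≤ s i ω)
    (h_indep : iIndepFun (Sum.elim a s) μ)
    (ha_ident : ∀ i, IdentDistrib (a i) (a 0) μ μ)
    (hs_ident : ∀ i, IdentDistrib (s i) (s 0) μ μ)
    (θstar : ℝ) (hθstar : 0 < θstar)
    (ha_int : Integrable (fun ω => Real.exp (θstar * a 0 ω)) μ)
    (hs_int : Integrable (fun ω => Real.exp (-θstar * s 0 ω)) μ)
    (α : ℝ) (hα : α = (1 / θstar) * Real.log (∫ ω, Real.exp (θstar * a 0 ω) ∂μ))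
    (h_stab : α ≤ -(1 / θstar) * Real.log (∫ ω, Real.exp (-θstar * s 0 ω) ∂μ))
    (D : ℕ → Ω → ℝ) (hD_meas : ∀ t, Measurable (D t))
    (hD_lb : ∀ ω t, (Finset.range (t + 1)).inf' ⟨0, Finset.mem_range.mpr (Nat.succ_pos t)⟩
        (fun u => (∑ i ∈ Finset.range u, a i ω) + ∑ i ∈ Finset.Ico u t, s i ω) ≤ D t ω)
    (hD_ub : ∀ ω t, D t ω ≤ ∑ i ∈ Finset.range t, a i ω)
    (t d : ℕ) (hd : d ≤ t) :
    μ {ω | D t ω < ∑ i ∈ Finset.range (t - d), a i ω}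
      ≤ ENNReal.ofReal (Real.exp (-θstar * α * d)) :=
  single_node_delay_bound_general μ a s ha_meas hs_meas ha_nonneg hs_nonneg h_indep ha_ident
    hs_ident θstar hθstar ha_int α hα h_stab D hD_lb t d hd
end
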